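/- arXiv:1106.5666 — 6 statements merged into one kernel-verified Lean document; each statement's English description precedes it below -/
import Mathlib

section
/- Let (𝒱, ρ, U) be a complex gradient system on a complex manifold M̃ and let V, W ∈ 𝒱. Then the Lie brackets [ρ(V), ρ(W)], [ρ(V), Jρ(W)] and [Jρ(V), Jρ(W)] are all smooth sections of the distribution 𝒟^ℝ_ρ; that is, at every point p ∈ M̃ each of these brackets lies in the subspace of T_pM̃ generated by the vectors ρ(V')_p, V' ∈ 𝒱. -/
open Set VectorField

noncomputable section

/-- The complex structure `J` (multiplication by `Complex.I`) on the tangent spaces of a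
complex vector space, as an `ℝ`-linear map. -/
def Jmap (E : Type*) [NormedAddCommGroup E] [NormedSpace ℂ E] : E →ₗ[ℝ] E where
  toFun v := Complex.I • v
  map_add' u v := smul_add Complex.I u v
  map_smul' r v := smul_comm Complex.I r v

variable {E : Type*} [NormedAddCommGroup E] [NormedSpace ℂ E]
  {𝒱 : Type*} [NormedAddCommGroup 𝒱] [NormedSpace ℝ 𝒱]

/-- The distribution `𝒟^ℝ_ρ` generated by the vector fields `ρ V`, `V ∈ 𝒱`. -/
def DRdistr (ρ : 𝒱 →ₗ[ℝ] (E → E)) (x : E) : Submodule ℝ E :=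
  Submodule.span ℝ (Set.range fun V => ρ V x)

/-- The distribution `𝒟^ℂ_ρ` generated by the vector fields `ρ V` and `J (ρ V)`, `V ∈ 𝒱`. -/
def DCdistr (ρ : 𝒱 →ₗ[ℝ] (E → E)) (x : E) : Submodule ℝ E :=
  Submodule.span ℝ ((Set.range fun V => ρ V x) ∪ (Set.range fun V => Complex.I • ρ V x))

/-- A complex gradient system on the open set `Ω` of the complex vector space `E`:
an `ℝ`-linear map `ρ` from `𝒱` to smooth vector fields and a smooth map `U : Ω → 𝒱`
with `dU(ρ V) = 0`, `d^cU(ρ V) = V` (where `d^cU(X) = -dU(JX)`), and such that the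
distribution `𝒟^ℂ_ρ` is integrable (equivalently, involutive). -/
structure IsComplexGradientSystem (Ω : Set E) (ρ : 𝒱 →ₗ[ℝ] (E → E)) (U : E → 𝒱) : Prop where
  isOpen : IsOpen Ω
  smooth_vectorField : ∀ V : 𝒱, ContDiffOn ℝ (⊤ : ℕ∞) (ρ V) Ω
  smooth_gradientMap : ContDiffOn ℝ (⊤ : ℕ∞) U Ω
  dU_rho : ∀ V : 𝒱, ∀ x ∈ Ω, fderivWithin ℝ U Ω x (ρ V x) = 0
  dcU_rho : ∀ V : 𝒱, ∀ x ∈ Ω, -fderivWithin ℝ U Ω x (Complex.I • ρ V x) = V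
  integrable : ∀ X Y : E → E, ContDiffOn ℝ (⊤ : ℕ∞) X Ω → ContDiffOn ℝ (⊤ : ℕ∞) Y Ω →
    (∀ x ∈ Ω, X x ∈ DCdistr ρ x) → (∀ x ∈ Ω, Y x ∈ DCdistr ρ x) →
    ∀ x ∈ Ω, lieBracketWithin ℝ X Y Ω x ∈ DCdistr ρ x


lemma mem_DRdistr_of_mem_DCdistr
    {Ω : Set E} {ρ : 𝒱 →ₗ[ℝ] (E → E)} {U : E → 𝒱}
    (h : IsComplexGradientSystem Ω ρ U) {x : E} (hx : x ∈ Ω) {v : E}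
    (hv : v ∈ DCdistr ρ x) (hdv : fderivWithin ℝ U Ω x v = 0) :
    v ∈ DRdistr ρ x := by
  set L2 : 𝒱 →ₗ[ℝ] E := (Jmap E).comp ((LinearMap.proj x).comp ρ) with hL2
  rw [DCdistr, Submodule.span_union] at hv
  obtain ⟨a, ha, b, hb, hab⟩ := Submodule.mem_sup.mp hv
  have haDR : a ∈ DRdistr ρ x := ha
  have hdUa : fderivWithin ℝ U Ω x a = 0 := by
    refine Submodule.span_induction (p := fun w _ => fderivWithin ℝ U Ω x w = 0)
      ?_ ?_ ?_ ?_ ha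
    · rintro _ ⟨A, rfl⟩; exact h.dU_rho A x hx
    · simp
    · intro y z _ _ hy hz; simp [hy, hz]
    · intro c y _ hy; simp [hy]
  have hb' : b ∈ LinearMap.range L2 := by
    have : (Set.range fun V : 𝒱 => Complex.I • ρ V x) = Set.range L2 := rfl
    rw [this, ← LinearMap.coe_range, Submodule.span_eq] at hb
    exact hb
  obtain ⟨B, hB⟩ := hb'
  have hdUb : fderivWithin ℝ U Ω x b = 0 := by
    have := hdv
    rw [← hab, map_add, hdUa, zero_add] at this
    exact this
  have hB0 : B = 0 := by
    have h1 : -fderivWithin ℝ U Ω x (Complex.I • ρ B x) = B := h.dcU_rho B x hx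
    have h2 : (Complex.I • ρ B x) = b := hB
    rw [h2, hdUb, neg_zero] at h1
    exact h1.symm
  have hb0 : b = 0 := by rw [← hB, hB0, map_zero]
  rw [← hab, hb0, add_zero]
  exact haDR

lemma fderivWithin_lieBracketWithin_eq_zero
    {Ω : Set E} {ρ : 𝒱 →ₗ[ℝ] (E → E)} {U : E → 𝒱}
    (h : IsComplexGradientSystem Ω ρ U)
    {X Y : E → E} (hX : ContDiffOn ℝ (⊤ : ℕ∞) X Ω) (hY : ContDiffOn ℝ (⊤ : ℕ∞) Y Ω)
    {cX cY : 𝒱} (hcX : ∀ y ∈ Ω, fderivWithin ℝ U Ω y (X y) = cX)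
    (hcY : ∀ y ∈ Ω, fderivWithin ℝ U Ω y (Y y) = cY)
    {x : E} (hx : x ∈ Ω) :
    fderivWithin ℝ U Ω x (lieBracketWithin ℝ X Y Ω x) = 0 := by
  have hΩ := h.isOpen
  have hnx : Ω ∈ nhds x := hΩ.mem_nhds hx
  have hUx : ContDiffAt ℝ (⊤ : ℕ∞) U x := (h.smooth_gradientMap x hx).contDiffAt hnx
  have hU' : DifferentiableAt ℝ (fderiv ℝ U) x :=
    (hUx.fderiv_right (m := 1) (WithTop.coe_le_coe.mpr le_top)).differentiableAt one_ne_zero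
  have key : ∀ (Z : E → E), ContDiffOn ℝ (⊤ : ℕ∞) Z Ω → ∀ c : 𝒱,
      (∀ y ∈ Ω, fderivWithin ℝ U Ω y (Z y) = c) → ∀ v : E,
      fderiv ℝ U x (fderiv ℝ Z x v) = - (fderiv ℝ (fderiv ℝ U) x v) (Z x) := by
    intro Z hZ c hc v
    have hZx : DifferentiableAt ℝ Z x := ((hZ x hx).contDiffAt hnx).differentiableAt (by simp)
    have heq : (fun y => fderiv ℝ U y (Z y)) =ᶠ[nhds x] fun _ => c := by
      filter_upwards [hnx] with y hy
      rw [← fderivWithin_of_isOpen hΩ hy]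
      exact hc y hy
    have h0 : fderiv ℝ (fun y => fderiv ℝ U y (Z y)) x = 0 := by
      rw [heq.fderiv_eq]; exact fderiv_const_apply c
    rw [fderiv_clm_apply hU' hZx] at h0
    have h1 := ContinuousLinearMap.ext_iff.mp h0 v
    simp only [ContinuousLinearMap.add_apply, ContinuousLinearMap.comp_apply,
      ContinuousLinearMap.flip_apply, ContinuousLinearMap.zero_apply] at h1
    exact eq_neg_of_add_eq_zero_left h1
  have hXd : DifferentiableWithinAt ℝ X Ω x := (hX x hx).differentiableWithinAt (by simp)
  have hYd : DifferentiableWithinAt ℝ Y Ω x := (hY x hx).differentiableWithinAt (by simp)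
  have hbr : lieBracketWithin ℝ X Y Ω x = fderiv ℝ Y x (X x) - fderiv ℝ X x (Y x) := by
    rw [lieBracketWithin_eq]
    beta_reduce
    rw [fderivWithin_of_isOpen hΩ hx, fderivWithin_of_isOpen hΩ hx]
  rw [fderivWithin_of_isOpen hΩ hx, hbr, map_sub,
    key Y hY cY hcY (X x), key X hX cX hcX (Y x)]
  have hsymm : fderiv ℝ (fderiv ℝ U) x (X x) (Y x) = fderiv ℝ (fderiv ℝ U) x (Y x) (X x) :=
    hUx.isSymmSndFDerivAt (by simp; exact WithTop.coe_le_coe.mpr le_top) (X x) (Y x)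
  rw [hsymm]
  simp

/-- For a complex gradient system `(𝒱, ρ, U)` and `V, W ∈ 𝒱`, the
Lie brackets `[ρ V, ρ W]`, `[ρ V, J(ρ W)]` and `[J(ρ V), J(ρ W)]` are sections of the
distribution `𝒟^ℝ_ρ`. -/
theorem lieBracket_mem_DRdistr
    {Ω : Set E} {ρ : 𝒱 →ₗ[ℝ] (E → E)} {U : E → 𝒱}
    (h : IsComplexGradientSystem Ω ρ U) (V W : 𝒱) :
    ∀ x ∈ Ω,
      lieBracketWithin ℝ (ρ V) (ρ W) Ω x ∈ DRdistr ρ x ∧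
      lieBracketWithin ℝ (ρ V) (fun y => Complex.I • ρ W y) Ω x ∈ DRdistr ρ x ∧
      lieBracketWithin ℝ (fun y => Complex.I • ρ V y) (fun y => Complex.I • ρ W y) Ω x
        ∈ DRdistr ρ x := by
  have hJ : ∀ A : 𝒱, ContDiffOn ℝ (⊤ : ℕ∞) (fun y => Complex.I • ρ A y) Ω :=
    fun A => (h.smooth_vectorField A).const_smul Complex.I
  have hcJ : ∀ A : 𝒱, ∀ y ∈ Ω,
      fderivWithin ℝ U Ω y (Complex.I • ρ A y) = -A := fun A y hy => by
    exact neg_eq_iff_eq_neg.mp (h.dcU_rho A y hy)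
  have memV : ∀ A : 𝒱, ∀ y ∈ Ω, ρ A y ∈ DCdistr ρ y := fun A y _ =>
    Submodule.subset_span (Or.inl ⟨A, rfl⟩)
  have memJ : ∀ A : 𝒱, ∀ y ∈ Ω, Complex.I • ρ A y ∈ DCdistr ρ y := fun A y _ =>
    Submodule.subset_span (Or.inr ⟨A, rfl⟩)
  intro x hx
  refine ⟨?_, ?_, ?_⟩
  · exact mem_DRdistr_of_mem_DCdistr h hx
      (h.integrable _ _ (h.smooth_vectorField V) (h.smooth_vectorField W)
        (memV V) (memV W) x hx)
      (fderivWithin_lieBracketWithin_eq_zero h (h.smooth_vectorField V)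
        (h.smooth_vectorField W) (h.dU_rho V) (h.dU_rho W) hx)
  · exact mem_DRdistr_of_mem_DCdistr h hx
      (h.integrable _ _ (h.smooth_vectorField V) (hJ W) (memV V) (memJ W) x hx)
      (fderivWithin_lieBracketWithin_eq_zero h (h.smooth_vectorField V)
        (hJ W) (h.dU_rho V) (hcJ W) hx)
  · exact mem_DRdistr_of_mem_DCdistr h hx
      (h.integrable _ _ (hJ V) (hJ W) (memJ V) (memJ W) x hx)
      (fderivWithin_lieBracketWithin_eq_zero h (hJ V) (hJ W) (hcJ V) (hcJ W) hx)
end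
end

section
/- Let (𝒱, ρ, U) be a complex gradient system on a complex manifold M̃ and let V, W ∈ 𝒱. Then, applying ρ pointwise to the 𝒱-valued functions dd^cU(·,·), one has ρ(dd^cU(ρ(V), ρ(W))) = -[ρ(V), ρ(W)], ρ(dd^cU(Jρ(V), Jρ(W))) = -[ρ(V), ρ(W)], and ρ(dd^cU(ρ(V), Jρ(W))) = -[ρ(V), Jρ(W)]. -/
open Set VectorField

noncomputable section

variable {E : Type*} [NormedAddCommGroup E] [NormedSpace ℂ E]
  {𝒱 : Type*} [NormedAddCommGroup 𝒱] [NormedSpace ℝ 𝒱]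

/-- The function `d^cU(X) : x ↦ -dU(J (X x))` associated to a vector field `X`. -/
def dcApply (Ω : Set E) (U : E → 𝒱) (X : E → E) : E → 𝒱 :=
  fun x => -fderivWithin ℝ U Ω x (Complex.I • X x)

/-- The two-form `dd^cU` evaluated on vector fields `X, Y`, via the intrinsic formula
`dd^cU(X,Y) = X(d^cU(Y)) - Y(d^cU(X)) - d^cU([X,Y])`. -/
def ddcApply (Ω : Set E) (U : E → 𝒱) (X Y : E → E) (x : E) : 𝒱 :=
  fderivWithin ℝ (dcApply Ω U Y) Ω x (X x) - fderivWithin ℝ (dcApply Ω U X) Ω x (Y x)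
    - dcApply Ω U (lieBracketWithin ℝ X Y Ω) x

/-! ### Auxiliary lemmas -/

/-- Symmetry of the second derivative of `U` within an open set. -/
lemma cgs_symm {Ω : Set E} {U : E → 𝒱} (hU : ContDiffOn ℝ (⊤ : ℕ∞) U Ω) (hΩ : IsOpen Ω)
    {x : E} (hx : x ∈ Ω) (v w : E) :
    fderivWithin ℝ (fderivWithin ℝ U Ω) Ω x v w
      = fderivWithin ℝ (fderivWithin ℝ U Ω) Ω x w v := by
  have h1 : fderivWithin ℝ (fderivWithin ℝ U Ω) Ω x = fderiv ℝ (fderiv ℝ U) x := by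
    rw [fderivWithin_of_isOpen hΩ hx]
    apply Filter.EventuallyEq.fderiv_eq
    filter_upwards [hΩ.mem_nhds hx] with y hy
    exact fderivWithin_of_isOpen hΩ hy
  rw [h1]
  exact ((hU.contDiffAt (hΩ.mem_nhds hx)).of_le (by rw [minSmoothness_of_isRCLikeNormedField]; exact WithTop.coe_le_coe.mpr le_top)).isSymmSndFDerivAt le_rfl v w

/-- If `dU(X)` is constant on `Ω`, then `dU(DX(v)) = -D²U(v)(X x)`. -/
lemma cgs_deriv_const {Ω : Set E} {U : E → 𝒱} (hU : ContDiffOn ℝ (⊤ : ℕ∞) U Ω) (hΩ : IsOpen Ω)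
    {X : E → E} (hX : ContDiffOn ℝ (⊤ : ℕ∞) X Ω) {c : 𝒱}
    (hc : ∀ y ∈ Ω, fderivWithin ℝ U Ω y (X y) = c) {x : E} (hx : x ∈ Ω) (v : E) :
    fderivWithin ℝ U Ω x (fderivWithin ℝ X Ω x v)
      = -(fderivWithin ℝ (fderivWithin ℝ U Ω) Ω x v (X x)) := by
  have hud : UniqueDiffOn ℝ Ω := hΩ.uniqueDiffOn
  have hF : DifferentiableWithinAt ℝ (fderivWithin ℝ U Ω) Ω x :=
    (hU.fderivWithin (m := 1) hud (WithTop.coe_le_coe.mpr le_top)).differentiableOn one_ne_zero x hx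
  have hXd : DifferentiableWithinAt ℝ X Ω x := hX.differentiableOn (by simp) x hx
  have h0 : fderivWithin ℝ (fun y => fderivWithin ℝ U Ω y (X y)) Ω x = 0 := by
    rw [fderivWithin_congr (fun y hy => hc y hy) (hc x hx)]
    exact fderivWithin_const_apply c
  rw [fderivWithin_clm_apply (hud x hx) hF hXd] at h0
  have := congrFun (congrArg DFunLike.coe h0) v
  simp only [ContinuousLinearMap.add_apply, ContinuousLinearMap.comp_apply,
    ContinuousLinearMap.flip_apply, ContinuousLinearMap.zero_apply] at this
  exact eq_neg_of_add_eq_zero_left this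

/-- `dU` kills the Lie bracket of two fields whose `dU`-pairing is constant. -/
lemma cgs_dU_bracket {Ω : Set E} {U : E → 𝒱} (hU : ContDiffOn ℝ (⊤ : ℕ∞) U Ω) (hΩ : IsOpen Ω)
    {X Y : E → E} (hX : ContDiffOn ℝ (⊤ : ℕ∞) X Ω) (hY : ContDiffOn ℝ (⊤ : ℕ∞) Y Ω) {cX cY : 𝒱}
    (hcX : ∀ y ∈ Ω, fderivWithin ℝ U Ω y (X y) = cX)
    (hcY : ∀ y ∈ Ω, fderivWithin ℝ U Ω y (Y y) = cY) {x : E} (hx : x ∈ Ω) :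
    fderivWithin ℝ U Ω x (lieBracketWithin ℝ X Y Ω x) = 0 := by
  rw [lieBracketWithin, map_sub, cgs_deriv_const hU hΩ hY hcY hx (X x),
    cgs_deriv_const hU hΩ hX hcX hx (Y x), cgs_symm hU hΩ hx (X x) (Y x)]
  abel

/-- Decomposition of elements of `DCdistr` via `dU` and `d^cU`. -/
lemma cgs_decomp {Ω : Set E} {ρ : 𝒱 →ₗ[ℝ] (E → E)} {U : E → 𝒱}
    (h : IsComplexGradientSystem Ω ρ U) {x : E} (hx : x ∈ Ω) {z : E}
    (hz : z ∈ DCdistr ρ x) :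
    ρ (-fderivWithin ℝ U Ω x (Complex.I • z)) x
      + Complex.I • ρ (-fderivWithin ℝ U Ω x z) x = z := by
  induction hz using Submodule.span_induction with
  | mem z hzm =>
    rcases hzm with ⟨c, rfl⟩ | ⟨c, rfl⟩
    · rw [h.dcU_rho c x hx, h.dU_rho c x hx, neg_zero, map_zero]
      simp
    · show ρ (-(fderivWithin ℝ U Ω x) (Complex.I • Complex.I • ρ c x)) x
          + Complex.I • ρ (-(fderivWithin ℝ U Ω x) (Complex.I • ρ c x)) x
          = Complex.I • ρ c x
      have h1 : Complex.I • Complex.I • ρ c x = -(ρ c x) := by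
        rw [smul_smul, Complex.I_mul_I, neg_one_smul]
      have h2 : -(fderivWithin ℝ U Ω x) (Complex.I • Complex.I • ρ c x) = 0 := by
        rw [h1, map_neg, h.dU_rho c x hx, neg_neg]
      rw [h2, map_zero, h.dcU_rho c x hx]
      simp
  | zero => simp
  | add a b ha hb iha ihb =>
    have e : ∀ w₁ w₂ : E, -(fderivWithin ℝ U Ω x) (w₁ + w₂)
        = -(fderivWithin ℝ U Ω x) w₁ + -(fderivWithin ℝ U Ω x) w₂ := by
      intro w₁ w₂; rw [map_add]; abel
    have e3 : ∀ c d : 𝒱, ρ (c + d) x = ρ c x + ρ d x := fun c d => by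
      rw [map_add]; rfl
    rw [smul_add, e, e, e3, e3, smul_add]
    conv_rhs => rw [← iha, ← ihb]
    abel
  | smul r a ha iha =>
    have e1 : Complex.I • r • a = r • Complex.I • a := smul_comm _ _ _
    have e2 : ∀ w : E, -(fderivWithin ℝ U Ω x) (r • w)
        = r • (-(fderivWithin ℝ U Ω x) w) := fun w => by rw [map_smul, smul_neg]
    have e3 : ∀ c : 𝒱, ρ (r • c) x = r • ρ c x := fun c => by rw [map_smul]; rfl
    rw [e1, e2, e2, e3, e3, smul_comm Complex.I r, ← smul_add, iha]

/-- The bracket of two suitable fields lies pointwise in the image of `ρ`,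
with coefficient `d^cU([X,Y])`. -/
lemma cgs_bracket_eq_rho {Ω : Set E} {ρ : 𝒱 →ₗ[ℝ] (E → E)} {U : E → 𝒱}
    (h : IsComplexGradientSystem Ω ρ U)
    {X Y : E → E} (hX : ContDiffOn ℝ (⊤ : ℕ∞) X Ω) (hY : ContDiffOn ℝ (⊤ : ℕ∞) Y Ω)
    (hXD : ∀ y ∈ Ω, X y ∈ DCdistr ρ y) (hYD : ∀ y ∈ Ω, Y y ∈ DCdistr ρ y)
    {cX cY : 𝒱}
    (hcX : ∀ y ∈ Ω, fderivWithin ℝ U Ω y (X y) = cX)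
    (hcY : ∀ y ∈ Ω, fderivWithin ℝ U Ω y (Y y) = cY) {x : E} (hx : x ∈ Ω) :
    ρ (dcApply Ω U (lieBracketWithin ℝ X Y Ω) x) x = lieBracketWithin ℝ X Y Ω x := by
  have hmem := h.integrable X Y hX hY hXD hYD x hx
  have hd := cgs_decomp h hx hmem
  rw [cgs_dU_bracket h.smooth_gradientMap h.isOpen hX hY hcX hcY hx] at hd
  rw [neg_zero, map_zero] at hd
  simpa [dcApply] using hd

/-- Main per-pair computation: `ρ(dd^cU(X,Y)) x = -[X,Y] x`. -/
lemma cgs_main {Ω : Set E} {ρ : 𝒱 →ₗ[ℝ] (E → E)} {U : E → 𝒱}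
    (h : IsComplexGradientSystem Ω ρ U)
    {X Y : E → E} (hX : ContDiffOn ℝ (⊤ : ℕ∞) X Ω) (hY : ContDiffOn ℝ (⊤ : ℕ∞) Y Ω)
    (hXD : ∀ y ∈ Ω, X y ∈ DCdistr ρ y) (hYD : ∀ y ∈ Ω, Y y ∈ DCdistr ρ y)
    {cX cY c'X c'Y : 𝒱}
    (hcX : ∀ y ∈ Ω, fderivWithin ℝ U Ω y (X y) = cX)
    (hcY : ∀ y ∈ Ω, fderivWithin ℝ U Ω y (Y y) = cY)
    (hc'X : ∀ y ∈ Ω, dcApply Ω U X y = c'X)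
    (hc'Y : ∀ y ∈ Ω, dcApply Ω U Y y = c'Y) {x : E} (hx : x ∈ Ω) :
    ρ (ddcApply Ω U X Y x) x = -lieBracketWithin ℝ X Y Ω x := by
  have hud : UniqueDiffOn ℝ Ω := h.isOpen.uniqueDiffOn
  have h1 : fderivWithin ℝ (dcApply Ω U Y) Ω x = 0 := by
    rw [fderivWithin_congr (fun y hy => hc'Y y hy) (hc'Y x hx)]
    exact fderivWithin_const_apply c'Y
  have h2 : fderivWithin ℝ (dcApply Ω U X) Ω x = 0 := by
    rw [fderivWithin_congr (fun y hy => hc'X y hy) (hc'X x hx)]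
    exact fderivWithin_const_apply c'X
  have h3 : ddcApply Ω U X Y x = -(dcApply Ω U (lieBracketWithin ℝ X Y Ω) x) := by
    rw [ddcApply, h1, h2]; simp
  rw [h3, map_neg]
  simp only [Pi.neg_apply]
  rw [cgs_bracket_eq_rho h hX hY hXD hYD hcX hcY hx]

/-- Key identity: `[JρV, JρW] x = [ρV, ρW] x` on a complex gradient system. -/
lemma cgs_bracketJJ {Ω : Set E} {ρ : 𝒱 →ₗ[ℝ] (E → E)} {U : E → 𝒱}
    (h : IsComplexGradientSystem Ω ρ U) (V W : 𝒱) {x : E} (hx : x ∈ Ω) :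
    lieBracketWithin ℝ (fun y => Complex.I • ρ V y) (fun y => Complex.I • ρ W y) Ω x
      = lieBracketWithin ℝ (ρ V) (ρ W) Ω x := by
  have hΩ := h.isOpen
  have hud : UniqueDiffOn ℝ Ω := hΩ.uniqueDiffOn
  have hU := h.smooth_gradientMap
  have hXs := h.smooth_vectorField V
  have hYs := h.smooth_vectorField W
  have hJXs : ContDiffOn ℝ (⊤ : ℕ∞) (fun y => Complex.I • ρ V y) Ω := hXs.const_smul Complex.I
  have hJYs : ContDiffOn ℝ (⊤ : ℕ∞) (fun y => Complex.I • ρ W y) Ω := hYs.const_smul Complex.I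
  have hXd : DifferentiableWithinAt ℝ (ρ V) Ω x := hXs.differentiableOn (by simp) x hx
  have hYd : DifferentiableWithinAt ℝ (ρ W) Ω x := hYs.differentiableOn (by simp) x hx
  have hDJX : fderivWithin ℝ (fun y => Complex.I • ρ V y) Ω x
      = Complex.I • fderivWithin ℝ (ρ V) Ω x := fderivWithin_const_smul (hud x hx) hXd _
  have hDJY : fderivWithin ℝ (fun y => Complex.I • ρ W y) Ω x
      = Complex.I • fderivWithin ℝ (ρ W) Ω x := fderivWithin_const_smul (hud x hx) hYd _
  -- memberships
  have hDV : ∀ y ∈ Ω, ρ V y ∈ DCdistr ρ y := fun y _ =>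
    Submodule.subset_span (Or.inl ⟨V, rfl⟩)
  have hDW : ∀ y ∈ Ω, ρ W y ∈ DCdistr ρ y := fun y _ =>
    Submodule.subset_span (Or.inl ⟨W, rfl⟩)
  have hDJV : ∀ y ∈ Ω, Complex.I • ρ V y ∈ DCdistr ρ y := fun y _ =>
    Submodule.subset_span (Or.inr ⟨V, rfl⟩)
  have hDJW : ∀ y ∈ Ω, Complex.I • ρ W y ∈ DCdistr ρ y := fun y _ =>
    Submodule.subset_span (Or.inr ⟨W, rfl⟩)
  -- constancy of dU on the four fields
  have hdUV : ∀ y ∈ Ω, fderivWithin ℝ U Ω y (ρ V y) = 0 := h.dU_rho V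
  have hdUW : ∀ y ∈ Ω, fderivWithin ℝ U Ω y (ρ W y) = 0 := h.dU_rho W
  have hdUJV : ∀ y ∈ Ω, fderivWithin ℝ U Ω y (Complex.I • ρ V y) = -V := fun y hy =>
    neg_eq_iff_eq_neg.mp (h.dcU_rho V y hy)
  have hdUJW : ∀ y ∈ Ω, fderivWithin ℝ U Ω y (Complex.I • ρ W y) = -W := fun y hy =>
    neg_eq_iff_eq_neg.mp (h.dcU_rho W y hy)
  -- abbreviations
  set DX := fderivWithin ℝ (ρ V) Ω x with hDX
  set DY := fderivWithin ℝ (ρ W) Ω x with hDY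
  set p1 := DY (ρ V x) with hp1
  set p2 := DX (ρ W x) with hp2
  set q1 := DY (Complex.I • ρ V x) with hq1
  set q2 := DX (Complex.I • ρ W x) with hq2
  set L1 := lieBracketWithin ℝ (fun y => Complex.I • ρ V y) (ρ W) Ω with hL1
  set L2 := lieBracketWithin ℝ (ρ V) (fun y => Complex.I • ρ W y) Ω with hL2
  have hb1 : L1 x = q1 - Complex.I • p2 := by
    rw [hL1, lieBracketWithin, hDJX]; rfl
  have hb2 : L2 x = Complex.I • p1 - q2 := by
    rw [hL2, lieBracketWithin, hDJY]; rfl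
  set Se := (q1 - Complex.I • p2) + (Complex.I • p1 - q2) with hSe
  have expand : Complex.I • Se
      = Complex.I • q1 + p2 - p1 - Complex.I • q2 := by
    rw [hSe, smul_add, smul_sub, smul_sub, smul_smul, smul_smul, Complex.I_mul_I,
      neg_one_smul, neg_one_smul]
    abel
  -- dU(I • Se) = 0
  have hDUS : fderivWithin ℝ U Ω x (Complex.I • Se) = 0 := by
    rw [expand, map_sub, map_sub, map_add]
    have hT1 : fderivWithin ℝ U Ω x (Complex.I • q1)
        = -(fderivWithin ℝ (fderivWithin ℝ U Ω) Ω x (Complex.I • ρ V x)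
            (Complex.I • ρ W x)) := by
      have e : Complex.I • q1
          = fderivWithin ℝ (fun y => Complex.I • ρ W y) Ω x (Complex.I • ρ V x) := by
        rw [hDJY]; rfl
      rw [e]
      exact cgs_deriv_const hU hΩ hJYs hdUJW hx (Complex.I • ρ V x)
    have hT4 : fderivWithin ℝ U Ω x (Complex.I • q2)
        = -(fderivWithin ℝ (fderivWithin ℝ U Ω) Ω x (Complex.I • ρ W x)
            (Complex.I • ρ V x)) := by
      have e : Complex.I • q2
          = fderivWithin ℝ (fun y => Complex.I • ρ V y) Ω x (Complex.I • ρ W x) := by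
        rw [hDJX]; rfl
      rw [e]
      exact cgs_deriv_const hU hΩ hJXs hdUJV hx (Complex.I • ρ W x)
    have hT2 : fderivWithin ℝ U Ω x p2
        = -(fderivWithin ℝ (fderivWithin ℝ U Ω) Ω x (ρ W x) (ρ V x)) :=
      cgs_deriv_const hU hΩ hXs hdUV hx (ρ W x)
    have hT3 : fderivWithin ℝ U Ω x p1
        = -(fderivWithin ℝ (fderivWithin ℝ U Ω) Ω x (ρ V x) (ρ W x)) :=
      cgs_deriv_const hU hΩ hYs hdUW hx (ρ V x)
    rw [hT1, hT2, hT3, hT4, cgs_symm hU hΩ hx (ρ V x) (ρ W x),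
      cgs_symm hU hΩ hx (Complex.I • ρ V x) (Complex.I • ρ W x)]
    abel
  -- the two mixed brackets are in the image of ρ
  have ha : ρ (dcApply Ω U L1 x) x = L1 x :=
    cgs_bracket_eq_rho h hJXs hYs hDJV hDW hdUJV hdUW hx
  have hbb : ρ (dcApply Ω U L2 x) x = L2 x :=
    cgs_bracket_eq_rho h hXs hJYs hDV hDJW hdUV hdUJW hx
  set A := dcApply Ω U L1 x with hA
  set B := dcApply Ω U L2 x with hB
  have hAB : A + B = 0 := by
    have eA : A = -fderivWithin ℝ U Ω x (Complex.I • L1 x) := rfl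
    have eB : B = -fderivWithin ℝ U Ω x (Complex.I • L2 x) := rfl
    rw [eA, eB, ← neg_add, ← map_add, ← smul_add,
      show L1 x + L2 x = Se from by rw [hb1, hb2], hDUS, neg_zero]
  have hS0 : Se = 0 := by
    calc Se = ρ A x + ρ B x := by rw [ha, hbb, hb1, hb2]
    _ = ρ (A + B) x := by rw [map_add]; rfl
    _ = 0 := by rw [hAB, map_zero]; rfl
  have hJJ : lieBracketWithin ℝ (fun y => Complex.I • ρ V y)
      (fun y => Complex.I • ρ W y) Ω x = Complex.I • q1 - Complex.I • q2 := by
    rw [lieBracketWithin, hDJX, hDJY]; rfl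
  have hfin : Complex.I • q1 + p2 - p1 - Complex.I • q2 = 0 := by
    rw [← expand, hS0, smul_zero]
  rw [hJJ, show lieBracketWithin ℝ (ρ V) (ρ W) Ω x = p1 - p2 from rfl, ← sub_eq_zero,
    show Complex.I • q1 - Complex.I • q2 - (p1 - p2)
      = Complex.I • q1 + p2 - p1 - Complex.I • q2 from by abel, hfin]

/-- For a complex gradient system `(𝒱, ρ, U)` and `V, W ∈ 𝒱`,
applying `ρ` pointwise to the `𝒱`-valued functions `dd^cU(·,·)`:
`ρ(dd^cU(ρV, ρW)) = -[ρV, ρW]`, `ρ(dd^cU(JρV, JρW)) = -[ρV, ρW]`, and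
`ρ(dd^cU(ρV, JρW)) = -[ρV, JρW]`. -/
theorem rho_ddc_eq_neg_lieBracket
    {Ω : Set E} {ρ : 𝒱 →ₗ[ℝ] (E → E)} {U : E → 𝒱}
    (h : IsComplexGradientSystem Ω ρ U) (V W : 𝒱) :
    ∀ x ∈ Ω,
      ρ (ddcApply Ω U (ρ V) (ρ W) x) x
        = -lieBracketWithin ℝ (ρ V) (ρ W) Ω x ∧
      ρ (ddcApply Ω U (fun y => Complex.I • ρ V y) (fun y => Complex.I • ρ W y) x) x
        = -lieBracketWithin ℝ (ρ V) (ρ W) Ω x ∧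
      ρ (ddcApply Ω U (ρ V) (fun y => Complex.I • ρ W y) x) x
        = -lieBracketWithin ℝ (ρ V) (fun y => Complex.I • ρ W y) Ω x := by
  intro x hx
  have hXs := h.smooth_vectorField V
  have hYs := h.smooth_vectorField W
  have hJXs : ContDiffOn ℝ (⊤ : ℕ∞) (fun y => Complex.I • ρ V y) Ω := hXs.const_smul Complex.I
  have hJYs : ContDiffOn ℝ (⊤ : ℕ∞) (fun y => Complex.I • ρ W y) Ω := hYs.const_smul Complex.I
  have hDV : ∀ y ∈ Ω, ρ V y ∈ DCdistr ρ y := fun y _ =>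
    Submodule.subset_span (Or.inl ⟨V, rfl⟩)
  have hDW : ∀ y ∈ Ω, ρ W y ∈ DCdistr ρ y := fun y _ =>
    Submodule.subset_span (Or.inl ⟨W, rfl⟩)
  have hDJV : ∀ y ∈ Ω, Complex.I • ρ V y ∈ DCdistr ρ y := fun y _ =>
    Submodule.subset_span (Or.inr ⟨V, rfl⟩)
  have hDJW : ∀ y ∈ Ω, Complex.I • ρ W y ∈ DCdistr ρ y := fun y _ =>
    Submodule.subset_span (Or.inr ⟨W, rfl⟩)
  have hdUV : ∀ y ∈ Ω, fderivWithin ℝ U Ω y (ρ V y) = 0 := h.dU_rho V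
  have hdUW : ∀ y ∈ Ω, fderivWithin ℝ U Ω y (ρ W y) = 0 := h.dU_rho W
  have hdUJV : ∀ y ∈ Ω, fderivWithin ℝ U Ω y (Complex.I • ρ V y) = -V := fun y hy =>
    neg_eq_iff_eq_neg.mp (h.dcU_rho V y hy)
  have hdUJW : ∀ y ∈ Ω, fderivWithin ℝ U Ω y (Complex.I • ρ W y) = -W := fun y hy =>
    neg_eq_iff_eq_neg.mp (h.dcU_rho W y hy)
  have hdcV : ∀ y ∈ Ω, dcApply Ω U (ρ V) y = V := h.dcU_rho V
  have hdcW : ∀ y ∈ Ω, dcApply Ω U (ρ W) y = W := h.dcU_rho W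
  have hdcJ : ∀ Z : 𝒱, ∀ y ∈ Ω, dcApply Ω U (fun z => Complex.I • ρ Z z) y = 0 := by
    intro Z y hy
    show -fderivWithin ℝ U Ω y (Complex.I • Complex.I • ρ Z y) = 0
    rw [smul_smul, Complex.I_mul_I, neg_one_smul, map_neg, h.dU_rho Z y hy, neg_neg]
  refine ⟨cgs_main h hXs hYs hDV hDW hdUV hdUW hdcV hdcW hx, ?_, ?_⟩
  · rw [cgs_main h hJXs hJYs hDJV hDJW hdUJV hdUJW (hdcJ V) (hdcJ W) hx,
      cgs_bracketJJ h V W hx]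
  · exact cgs_main h hXs hJYs hDV hDJW hdUV hdUJW hdcV (hdcJ W) hx
end
end

section
/- Let (𝒱, ρ, U) be a complex gradient system on a complex manifold M̃. Then for every V, W ∈ 𝒱 the Lie brackets satisfy [Jρ(V), Jρ(W)] = [ρ(V), ρ(W)] and [Jρ(V), ρ(W)] = -[ρ(V), Jρ(W)]. -/
open Set VectorField

noncomputable section

variable {E : Type*} [NormedAddCommGroup E] [NormedSpace ℂ E]
  {𝒱 : Type*} [NormedAddCommGroup 𝒱] [NormedSpace ℝ 𝒱]

/-- The linear parametrization `(V₁, V₂) ↦ ρ V₁ x + I • ρ V₂ x` of the fiber of `𝒟^ℂ_ρ`. -/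
def Tmap (ρ : 𝒱 →ₗ[ℝ] (E → E)) (x : E) : 𝒱 × 𝒱 →ₗ[ℝ] E where
  toFun p := ρ p.1 x + Complex.I • ρ p.2 x
  map_add' p q := by
    simp only [Prod.fst_add, Prod.snd_add, map_add, Pi.add_apply, smul_add]
    abel
  map_smul' r p := by
    simp only [Prod.smul_fst, Prod.smul_snd, map_smul, Pi.smul_apply, RingHom.id_apply,
      smul_add, smul_comm Complex.I r]

lemma mem_DCdistr_iff {ρ : 𝒱 →ₗ[ℝ] (E → E)} {x : E} {Z : E} :
    Z ∈ DCdistr ρ x ↔ ∃ V₁ V₂ : 𝒱, Z = ρ V₁ x + Complex.I • ρ V₂ x := by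
  have hrange : DCdistr ρ x = LinearMap.range (Tmap ρ x) := by
    apply le_antisymm
    · rw [DCdistr, Submodule.span_le]
      rintro z (⟨V, rfl⟩ | ⟨V, rfl⟩)
      · exact ⟨(V, 0), by simp [Tmap]⟩
      · exact ⟨(0, V), by simp [Tmap]⟩
    · rintro z ⟨p, rfl⟩
      exact Submodule.add_mem _
        (Submodule.subset_span (Or.inl ⟨p.1, rfl⟩))
        (Submodule.subset_span (Or.inr ⟨p.2, rfl⟩))
  rw [hrange]
  constructor
  · rintro ⟨p, rfl⟩; exact ⟨p.1, p.2, rfl⟩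
  · rintro ⟨V₁, V₂, rfl⟩; exact ⟨(V₁, V₂), rfl⟩

/-- If `dU(Z) = 0` and `dU(I • Z) = 0` for `Z` in the fiber of `𝒟^ℂ_ρ`, then `Z = 0`. -/
lemma eq_zero_of_dU_eq_zero {Ω : Set E} {ρ : 𝒱 →ₗ[ℝ] (E → E)} {U : E → 𝒱}
    (h : IsComplexGradientSystem Ω ρ U) {x : E} (hx : x ∈ Ω) {Z : E}
    (hZ : Z ∈ DCdistr ρ x) (h1 : fderivWithin ℝ U Ω x Z = 0)
    (h2 : fderivWithin ℝ U Ω x (Complex.I • Z) = 0) : Z = 0 := by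
  obtain ⟨V₁, V₂, rfl⟩ := mem_DCdistr_iff.1 hZ
  have hIV : ∀ V : 𝒱, fderivWithin ℝ U Ω x (Complex.I • ρ V x) = -V := fun V =>
    neg_eq_iff_eq_neg.1 (h.dcU_rho V x hx)
  have hV2 : V₂ = 0 := by
    have e : fderivWithin ℝ U Ω x (ρ V₁ x + Complex.I • ρ V₂ x) = -V₂ := by
      rw [map_add, h.dU_rho V₁ x hx, hIV V₂, zero_add]
    have := e.symm.trans h1
    simpa using this
  subst hV2
  have hρ0 : ρ (0 : 𝒱) x = 0 := by rw [map_zero]; rfl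
  rw [hρ0, smul_zero, add_zero] at h2 ⊢
  rw [hIV V₁] at h2
  have hV1 : V₁ = 0 := by simpa using h2
  subst hV1
  rw [map_zero]; rfl

/-- For a complex gradient system `(𝒱, ρ, U)` and `V, W ∈ 𝒱`:
`[J(ρV), J(ρW)] = [ρV, ρW]` and `[J(ρV), ρW] = -[ρV, J(ρW)]`. -/
theorem lieBracket_J_eq
    {Ω : Set E} {ρ : 𝒱 →ₗ[ℝ] (E → E)} {U : E → 𝒱}
    (h : IsComplexGradientSystem Ω ρ U) (V W : 𝒱) :
    ∀ x ∈ Ω,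
      lieBracketWithin ℝ (fun y => Complex.I • ρ V y) (fun y => Complex.I • ρ W y) Ω x
        = lieBracketWithin ℝ (ρ V) (ρ W) Ω x ∧
      lieBracketWithin ℝ (fun y => Complex.I • ρ V y) (ρ W) Ω x
        = -lieBracketWithin ℝ (ρ V) (fun y => Complex.I • ρ W y) Ω x := by
  intro x hx
  have hΩ := h.isOpen
  have hud : UniqueDiffOn ℝ Ω := hΩ.uniqueDiffOn
  have hudx : UniqueDiffWithinAt ℝ Ω x := hud x hx
  -- smoothness of the four vector fields
  have hX : ContDiffOn ℝ (⊤ : ℕ∞) (ρ V) Ω := h.smooth_vectorField V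
  have hY : ContDiffOn ℝ (⊤ : ℕ∞) (ρ W) Ω := h.smooth_vectorField W
  have hJX : ContDiffOn ℝ (⊤ : ℕ∞) (fun y => Complex.I • ρ V y) Ω := hX.const_smul _
  have hJY : ContDiffOn ℝ (⊤ : ℕ∞) (fun y => Complex.I • ρ W y) Ω := hY.const_smul _
  have hXd : DifferentiableWithinAt ℝ (ρ V) Ω x := (hX x hx).differentiableWithinAt (by simp)
  have hYd : DifferentiableWithinAt ℝ (ρ W) Ω x := (hY x hx).differentiableWithinAt (by simp)
  -- memberships of the fields in the distribution
  have hmem : ∀ (V' : 𝒱), ∀ y ∈ Ω, ρ V' y ∈ DCdistr ρ y :=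
    fun V' y _ => Submodule.subset_span (Or.inl ⟨V', rfl⟩)
  have hmemJ : ∀ (V' : 𝒱), ∀ y ∈ Ω, Complex.I • ρ V' y ∈ DCdistr ρ y :=
    fun V' y _ => Submodule.subset_span (Or.inr ⟨V', rfl⟩)
  -- the key vanishing: dU of any bracket of fields on which dU is constant is zero
  have key : ∀ (X Y : E → E), ContDiffOn ℝ (⊤ : ℕ∞) X Ω → ContDiffOn ℝ (⊤ : ℕ∞) Y Ω →
      (∃ cX : 𝒱, ∀ z ∈ Ω, fderivWithin ℝ U Ω z (X z) = cX) →
      (∃ cY : 𝒱, ∀ z ∈ Ω, fderivWithin ℝ U Ω z (Y z) = cY) →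
      fderivWithin ℝ U Ω x (lieBracketWithin ℝ X Y Ω x) = 0 := by
    rintro X Y hXs hYs ⟨cX, hcX⟩ ⟨cY, hcY⟩
    have hFsm : ContDiffOn ℝ 1 (fderivWithin ℝ U Ω) Ω :=
      h.smooth_gradientMap.fderivWithin hud (by exact WithTop.coe_le_coe.2 le_top)
    have hFd : DifferentiableWithinAt ℝ (fderivWithin ℝ U Ω) Ω x :=
      (hFsm x hx).differentiableWithinAt (by simp)
    have hXd' : DifferentiableWithinAt ℝ X Ω x := (hXs x hx).differentiableWithinAt (by simp)
    have hYd' : DifferentiableWithinAt ℝ Y Ω x := (hYs x hx).differentiableWithinAt (by simp)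
    have hsymm : IsSymmSndFDerivWithinAt ℝ U Ω x :=
      (h.smooth_gradientMap x hx).isSymmSndFDerivWithinAt
        (by rw [minSmoothness_of_isRCLikeNormedField]; exact WithTop.coe_le_coe.2 (le_top : (2 : ℕ∞) ≤ ⊤)) hud
        (by rw [hΩ.interior_eq]; exact subset_closure hx) hx
    have hder : ∀ (Z : E → E), DifferentiableWithinAt ℝ Z Ω x →
        (∃ c : 𝒱, ∀ z ∈ Ω, fderivWithin ℝ U Ω z (Z z) = c) → ∀ v : E,
        fderivWithin ℝ U Ω x (fderivWithin ℝ Z Ω x v)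
          + fderivWithin ℝ (fderivWithin ℝ U Ω) Ω x v (Z x) = 0 := by
      rintro Z hZd ⟨c, hc⟩ v
      have h0 : fderivWithin ℝ (fun z => fderivWithin ℝ U Ω z (Z z)) Ω x = 0 := by
        rw [fderivWithin_congr (fun z hz => hc z hz) (hc x hx)]
        exact fderivWithin_const_apply _
      have h1 := fderivWithin_clm_apply hudx hFd hZd
      have h2 : (fderivWithin ℝ U Ω x).comp (fderivWithin ℝ Z Ω x)
          + (fderivWithin ℝ (fderivWithin ℝ U Ω) Ω x).flip (Z x) = 0 := h1 ▸ h0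
      have h3 := congrFun (congrArg DFunLike.coe h2) v
      simpa [ContinuousLinearMap.add_apply, ContinuousLinearMap.comp_apply,
        ContinuousLinearMap.flip_apply] using h3
    have e1 := hder X hXd' ⟨cX, hcX⟩ (Y x)
    have e2 := hder Y hYd' ⟨cY, hcY⟩ (X x)
    have e1' : fderivWithin ℝ U Ω x (fderivWithin ℝ X Ω x (Y x))
        = -(fderivWithin ℝ (fderivWithin ℝ U Ω) Ω x (Y x) (X x)) :=
      eq_neg_of_add_eq_zero_left e1
    have e2' : fderivWithin ℝ U Ω x (fderivWithin ℝ Y Ω x (X x))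
        = -(fderivWithin ℝ (fderivWithin ℝ U Ω) Ω x (X x) (Y x)) :=
      eq_neg_of_add_eq_zero_left e2
    rw [lieBracketWithin, map_sub, e1', e2', hsymm.eq (X x) (Y x)]
    abel
  -- dU vanishes on the four brackets
  have hc0 : ∀ V' : 𝒱, ∃ c : 𝒱, ∀ z ∈ Ω, fderivWithin ℝ U Ω z (ρ V' z) = c :=
    fun V' => ⟨0, fun z hz => h.dU_rho V' z hz⟩
  have hcJ : ∀ V' : 𝒱, ∃ c : 𝒱, ∀ z ∈ Ω,
      fderivWithin ℝ U Ω z ((fun y => Complex.I • ρ V' y) z) = c :=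
    fun V' => ⟨-V', fun z hz => neg_eq_iff_eq_neg.1 (h.dcU_rho V' z hz)⟩
  have k1 := key _ _ hJX hJY (hcJ V) (hcJ W)
  have k2 := key _ _ hX hY (hc0 V) (hc0 W)
  have k3 := key _ _ hJX hY (hcJ V) (hc0 W)
  have k4 := key _ _ hX hJY (hc0 V) (hcJ W)
  -- brackets belong to the distribution
  have m3 : lieBracketWithin ℝ (fun y => Complex.I • ρ V y) (ρ W) Ω x ∈ DCdistr ρ x :=
    h.integrable _ _ hJX hY (fun y hy => hmemJ V y hy) (fun y hy => hmem W y hy) x hx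
  have m4 : lieBracketWithin ℝ (ρ V) (fun y => Complex.I • ρ W y) Ω x ∈ DCdistr ρ x :=
    h.integrable _ _ hX hJY (fun y hy => hmem V y hy) (fun y hy => hmemJ W y hy) x hx
  -- Nijenhuis identity (flat case): a = I • b
  have hDJX : fderivWithin ℝ (fun y => Complex.I • ρ V y) Ω x
      = Complex.I • fderivWithin ℝ (ρ V) Ω x := fderivWithin_const_smul hudx hXd _
  have hDJY : fderivWithin ℝ (fun y => Complex.I • ρ W y) Ω x
      = Complex.I • fderivWithin ℝ (ρ W) Ω x := fderivWithin_const_smul hudx hYd _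
  have ha_eq : lieBracketWithin ℝ (fun y => Complex.I • ρ V y) (fun y => Complex.I • ρ W y) Ω x
        - lieBracketWithin ℝ (ρ V) (ρ W) Ω x
      = Complex.I • (lieBracketWithin ℝ (fun y => Complex.I • ρ V y) (ρ W) Ω x
        + lieBracketWithin ℝ (ρ V) (fun y => Complex.I • ρ W y) Ω x) := by
    simp only [lieBracketWithin, hDJX, hDJY, ContinuousLinearMap.smul_apply, smul_sub, smul_add,
      smul_smul, Complex.I_mul_I, neg_one_smul]
    abel
  -- conclude b = 0 and a = 0
  set b := lieBracketWithin ℝ (fun y => Complex.I • ρ V y) (ρ W) Ω x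
    + lieBracketWithin ℝ (ρ V) (fun y => Complex.I • ρ W y) Ω x with hbdef
  have hbmem : b ∈ DCdistr ρ x := Submodule.add_mem _ m3 m4
  have hFb : fderivWithin ℝ U Ω x b = 0 := by rw [hbdef, map_add, k3, k4, add_zero]
  have hFJb : fderivWithin ℝ U Ω x (Complex.I • b) = 0 := by
    rw [← ha_eq, map_sub, k1, k2, sub_zero]
  have hb0 : b = 0 := eq_zero_of_dU_eq_zero h hx hbmem hFb hFJb
  have ha0 : lieBracketWithin ℝ (fun y => Complex.I • ρ V y) (fun y => Complex.I • ρ W y) Ω x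
      - lieBracketWithin ℝ (ρ V) (ρ W) Ω x = 0 := by rw [ha_eq, hb0, smul_zero]
  exact ⟨sub_eq_zero.1 ha0, eq_neg_of_add_eq_zero_left hb0⟩
end
end

section
/- Let (𝒱, ρ, U) be a complex gradient system on a complex manifold M̃, and for V ∈ 𝒱 let ρ^ℂ(V) = ½(ρ(V) - iJρ(V)) be the associated complex vector field of type (1,0). Then for every V, W ∈ 𝒱 one has [ρ^ℂ(V), ρ^ℂ(W)] = 0, where [·,·] is the complex-bilinear extension of the Lie bracket to complexified vector fields. -/
open Set VectorField

noncomputable section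

variable {E : Type*} [NormedAddCommGroup E] [NormedSpace ℂ E]
  {𝒱 : Type*} [NormedAddCommGroup 𝒱] [NormedSpace ℝ 𝒱]

/-- A complexified vector field on `E` is encoded as a pair `(Z₁, Z₂)` of real vector
fields, representing `Z₁ + i Z₂` as a section of `ℂ ⊗ TE`. The Lie bracket extends
complex-bilinearly: `[Z, W] = ([Z₁,W₁] - [Z₂,W₂]) + i ([Z₁,W₂] + [Z₂,W₁])`. -/
def cLieBracketWithin (Ω : Set E) (Z W : (E → E) × (E → E)) (x : E) : E × E :=
  (lieBracketWithin ℝ Z.1 W.1 Ω x - lieBracketWithin ℝ Z.2 W.2 Ω x,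
   lieBracketWithin ℝ Z.1 W.2 Ω x + lieBracketWithin ℝ Z.2 W.1 Ω x)

/-- The complexified representation `ρ^ℂ(V) = ½(ρ(V) - i J ρ(V))`, the type `(1,0)`
complex vector field associated to the real vector field `ρ V`, encoded as a pair
(real part, imaginary part). -/
def rhoC (ρ : 𝒱 →ₗ[ℝ] (E → E)) (V : 𝒱) : (E → E) × (E → E) :=
  (fun x => (1 / 2 : ℝ) • ρ V x, fun x => -((1 / 2 : ℝ) • (Complex.I • ρ V x)))

/-- For a complex gradient system `(𝒱, ρ, U)`, the complexified
vector fields `ρ^ℂ(V) = ½(ρ(V) - i J ρ(V))` commute: `[ρ^ℂ(V), ρ^ℂ(W)] = 0` for all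
`V, W ∈ 𝒱`. -/
theorem cLieBracket_rhoC_eq_zero
    {Ω : Set E} {ρ : 𝒱 →ₗ[ℝ] (E → E)} {U : E → 𝒱}
    (h : IsComplexGradientSystem Ω ρ U) (V W : 𝒱) :
    ∀ x ∈ Ω, cLieBracketWithin Ω (rhoC ρ V) (rhoC ρ W) x = 0 := by
  intro x hx
  have hu : UniqueDiffOn ℝ Ω := h.isOpen.uniqueDiffOn
  have hux : UniqueDiffWithinAt ℝ Ω x := hu x hx
  -- differentiability of the vector fields
  have hd : ∀ V' : 𝒱, DifferentiableWithinAt ℝ (ρ V') Ω x :=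
    fun V' => (h.smooth_vectorField V' x hx).differentiableWithinAt (by simp)
  have hdI : ∀ V' : 𝒱, DifferentiableWithinAt ℝ (fun y => Complex.I • ρ V' y) Ω x :=
    fun V' => (hd V').const_smul Complex.I
  set P : E →L[ℝ] E := fderivWithin ℝ (ρ W) Ω x with hP
  set Q : E →L[ℝ] E := fderivWithin ℝ (ρ V) Ω x with hQ
  set a : E := ρ V x with ha
  set b : E := ρ W x with hb
  set DU : E → (E →L[ℝ] 𝒱) := fderivWithin ℝ U Ω with hDU
  set H : E →L[ℝ] (E →L[ℝ] 𝒱) := fderivWithin ℝ DU Ω x with hH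
  have hfI : ∀ V' : 𝒱, fderivWithin ℝ (fun y => Complex.I • ρ V' y) Ω x
      = Complex.I • fderivWithin ℝ (ρ V') Ω x :=
    fun V' => fderivWithin_const_smul hux (hd V') Complex.I
  have hDUc : ContDiffOn ℝ 1 DU Ω := h.smooth_gradientMap.fderivWithin hu (WithTop.coe_le_coe.mpr le_top)
  have hDUd : DifferentiableWithinAt ℝ DU Ω x := (hDUc.differentiableOn one_ne_zero) x hx
  -- symmetry of the second derivative
  have hsym : ∀ v w : E, H v w = H w v :=
    (h.smooth_gradientMap x hx).isSymmSndFDerivWithinAt (by simp; exact WithTop.coe_le_coe.mpr le_top) hu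
      (by rw [h.isOpen.interior_eq]; exact subset_closure hx) hx
  -- key identity A
  have hA : ∀ (V' : 𝒱) (v : E),
      DU x (fderivWithin ℝ (ρ V') Ω x v) = - H v (ρ V' x) := by
    intro V' v
    have hzero : fderivWithin ℝ (fun y => DU y (ρ V' y)) Ω x = 0 := by
      have hcong : ∀ y ∈ Ω, (fun y => DU y (ρ V' y)) y = (fun _ => (0 : 𝒱)) y :=
        fun y hy => h.dU_rho V' y hy
      rw [fderivWithin_congr hcong (hcong x hx)]
      exact fderivWithin_const_apply _
    rw [fderivWithin_clm_apply hux hDUd (hd V')] at hzero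
    have h2 := congrArg (fun L : E →L[ℝ] 𝒱 => L v) hzero
    simp only [ContinuousLinearMap.add_apply, ContinuousLinearMap.coe_comp',
      Function.comp_apply, ContinuousLinearMap.flip_apply,
      ContinuousLinearMap.zero_apply] at h2
    exact eq_neg_of_add_eq_zero_left h2
  -- key identity B
  have hB : ∀ (V' : 𝒱) (v : E),
      DU x (Complex.I • fderivWithin ℝ (ρ V') Ω x v) = - H v (Complex.I • ρ V' x) := by
    intro V' v
    have hzero : fderivWithin ℝ (fun y => DU y (Complex.I • ρ V' y)) Ω x = 0 := by
      have hcong : ∀ y ∈ Ω, (fun y => DU y (Complex.I • ρ V' y)) y = (fun _ => (-V' : 𝒱)) y := by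
        intro y hy
        have := h.dcU_rho V' y hy
        simpa [neg_eq_iff_eq_neg] using this
      rw [fderivWithin_congr hcong (hcong x hx)]
      exact fderivWithin_const_apply _
    rw [fderivWithin_clm_apply hux hDUd (hdI V')] at hzero
    have h2 := congrArg (fun L : E →L[ℝ] 𝒱 => L v) hzero
    rw [hfI V'] at h2
    simp only [ContinuousLinearMap.add_apply, ContinuousLinearMap.coe_comp',
      Function.comp_apply, ContinuousLinearMap.flip_apply,
      ContinuousLinearMap.zero_apply, ContinuousLinearMap.smul_apply] at h2
    exact eq_neg_of_add_eq_zero_left h2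
  -- the two combinations of brackets
  set ξ : E := P a - Q b - Complex.I • (P (Complex.I • a)) + Complex.I • (Q (Complex.I • b))
    with hξdef
  set η : E := Complex.I • (P a) + P (Complex.I • a) - Q (Complex.I • b) - Complex.I • (Q b)
    with hηdef
  have hIξ : Complex.I • ξ = η := by
    rw [hξdef, hηdef]
    rw [smul_add, smul_sub, smul_sub, smul_smul, smul_smul, Complex.I_mul_I,
      neg_one_smul, neg_one_smul]
    abel
  -- dU vanishes on ξ and η
  have hDUξ : DU x ξ = 0 := by
    rw [hξdef]
    rw [map_add, map_sub, map_sub, hA W a, hA V b, hB W (Complex.I • a), hB V (Complex.I • b)]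
    rw [hsym a b, hsym (Complex.I • a) (Complex.I • b)]
    abel
  have hDUη : DU x η = 0 := by
    rw [hηdef]
    rw [map_sub, map_sub, map_add, hB W a, hA W (Complex.I • a), hA V (Complex.I • b),
      hB V b]
    rw [hsym a (Complex.I • b), hsym (Complex.I • a) b]
    abel
  -- membership of ξ and η in the distribution, via integrability
  have hmem : ∀ V' : 𝒱, ∀ y ∈ Ω, ρ V' y ∈ DCdistr ρ y :=
    fun V' y _ => Submodule.subset_span (Or.inl ⟨V', rfl⟩)
  have hmemI : ∀ V' : 𝒱, ∀ y ∈ Ω, Complex.I • ρ V' y ∈ DCdistr ρ y :=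
    fun V' y _ => Submodule.subset_span (Or.inr ⟨V', rfl⟩)
  have hsm : ∀ V' : 𝒱, ContDiffOn ℝ (⊤ : ℕ∞) (ρ V') Ω := h.smooth_vectorField
  have hsmI : ∀ V' : 𝒱, ContDiffOn ℝ (⊤ : ℕ∞) (fun y => Complex.I • ρ V' y) Ω :=
    fun V' => (hsm V').const_smul Complex.I
  have hbk1 : lieBracketWithin ℝ (ρ V) (ρ W) Ω x ∈ DCdistr ρ x :=
    h.integrable _ _ (hsm V) (hsm W) (hmem V) (hmem W) x hx
  have hbk2 : lieBracketWithin ℝ (fun y => Complex.I • ρ V y)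
      (fun y => Complex.I • ρ W y) Ω x ∈ DCdistr ρ x :=
    h.integrable _ _ (hsmI V) (hsmI W) (hmemI V) (hmemI W) x hx
  have hbk3 : lieBracketWithin ℝ (ρ V) (fun y => Complex.I • ρ W y) Ω x ∈ DCdistr ρ x :=
    h.integrable _ _ (hsm V) (hsmI W) (hmem V) (hmemI W) x hx
  have hbk4 : lieBracketWithin ℝ (fun y => Complex.I • ρ V y) (ρ W) Ω x ∈ DCdistr ρ x :=
    h.integrable _ _ (hsmI V) (hsm W) (hmemI V) (hmem W) x hx
  have hbk1' : lieBracketWithin ℝ (ρ V) (ρ W) Ω x = P a - Q b := rfl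
  have hbk2' : lieBracketWithin ℝ (fun y => Complex.I • ρ V y)
      (fun y => Complex.I • ρ W y) Ω x
      = Complex.I • (P (Complex.I • a)) - Complex.I • (Q (Complex.I • b)) := by
    rw [lieBracketWithin, hfI V, hfI W]
    rfl
  have hbk3' : lieBracketWithin ℝ (ρ V) (fun y => Complex.I • ρ W y) Ω x
      = Complex.I • (P a) - Q (Complex.I • b) := by
    rw [lieBracketWithin, hfI W]
    rfl
  have hbk4' : lieBracketWithin ℝ (fun y => Complex.I • ρ V y) (ρ W) Ω x
      = P (Complex.I • a) - Complex.I • (Q b) := by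
    rw [lieBracketWithin, hfI V]
    rfl
  have hξmem : ξ ∈ DCdistr ρ x := by
    have : ξ = lieBracketWithin ℝ (ρ V) (ρ W) Ω x
        - lieBracketWithin ℝ (fun y => Complex.I • ρ V y)
            (fun y => Complex.I • ρ W y) Ω x := by
      rw [hbk1', hbk2', hξdef]; abel
    rw [this]; exact sub_mem hbk1 hbk2
  have hηmem : η ∈ DCdistr ρ x := by
    have : η = lieBracketWithin ℝ (ρ V) (fun y => Complex.I • ρ W y) Ω x
        + lieBracketWithin ℝ (fun y => Complex.I • ρ V y) (ρ W) Ω x := by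
      rw [hbk3', hbk4', hηdef]; abel
    rw [this]; exact add_mem hbk3 hbk4
  -- injectivity of (dU, dU ∘ J) on the distribution
  have key : ∀ ζ : E, ζ ∈ DCdistr ρ x → DU x ζ = 0 → DU x (Complex.I • ζ) = 0 → ζ = 0 := by
    intro ζ hζ hζ1 hζ2
    -- realize the distribution as the range of a linear map
    have hrep : ∃ A B : 𝒱, ζ = ρ A x + Complex.I • ρ B x := by
      let L : 𝒱 × 𝒱 →ₗ[ℝ] E :=
        { toFun := fun p => ρ p.1 x + Complex.I • ρ p.2 x
          map_add' := by
            intro p q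
            simp only [Prod.fst_add, Prod.snd_add, map_add, LinearMap.add_apply, Pi.add_apply,
              smul_add]
            abel
          map_smul' := by
            intro c p
            simp only [Prod.smul_fst, Prod.smul_snd, map_smul, LinearMap.smul_apply,
              Pi.smul_apply, RingHom.id_apply, smul_add, smul_comm Complex.I c] }
      have hle : DCdistr ρ x ≤ LinearMap.range L := by
        rw [DCdistr, Submodule.span_le]
        rintro ζ' (⟨V', rfl⟩ | ⟨V', rfl⟩)
        · exact ⟨(V', 0), by simp [L]⟩
        · exact ⟨(0, V'), by simp [L]⟩
      obtain ⟨⟨A, B⟩, hAB⟩ := hle hζ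
      exact ⟨A, B, hAB.symm⟩
    obtain ⟨A, B, rfl⟩ := hrep
    have hdUrho : ∀ C : 𝒱, DU x (ρ C x) = 0 := fun C => h.dU_rho C x hx
    have hdUIrho : ∀ C : 𝒱, DU x (Complex.I • ρ C x) = -C := by
      intro C
      have := h.dcU_rho C x hx
      simpa [neg_eq_iff_eq_neg] using this
    have hB0 : B = 0 := by
      have : DU x (ρ A x + Complex.I • ρ B x) = -B := by
        rw [map_add, hdUrho A, hdUIrho B, zero_add]
      rw [hζ1] at this
      simpa using this.symm
    subst hB0
    simp only [map_zero, Pi.zero_apply, smul_zero, add_zero] at hζ2 ⊢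
    have hA0 : A = 0 := by
      have := hdUIrho A
      rw [hζ2] at this
      simpa using this.symm
    subst hA0
    simp
  -- conclude
  have hξ0 : ξ = 0 := key ξ hξmem hDUξ (by rw [hIξ]; exact hDUη)
  have hη0 : η = 0 := by rw [← hIξ, hξ0, smul_zero]
  -- now compute the goal
  have hf1 : fderivWithin ℝ (fun y => (1 / 2 : ℝ) • ρ V y) Ω x
      = (1 / 2 : ℝ) • Q := fderivWithin_const_smul hux (hd V) _
  have hf2 : fderivWithin ℝ (fun y => (1 / 2 : ℝ) • ρ W y) Ω x
      = (1 / 2 : ℝ) • P := fderivWithin_const_smul hux (hd W) _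
  have hf3 : fderivWithin ℝ (fun y => -((1 / 2 : ℝ) • (Complex.I • ρ V y))) Ω x
      = -((1 / 2 : ℝ) • (Complex.I • Q)) := by
    rw [fderivWithin_fun_neg hux, fderivWithin_fun_const_smul hux (hdI V) _, hfI V]
  have hf4 : fderivWithin ℝ (fun y => -((1 / 2 : ℝ) • (Complex.I • ρ W y))) Ω x
      = -((1 / 2 : ℝ) • (Complex.I • P)) := by
    rw [fderivWithin_fun_neg hux, fderivWithin_fun_const_smul hux (hdI W) _, hfI W]
  have hreal : lieBracketWithin ℝ (rhoC ρ V).1 (rhoC ρ W).1 Ω x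
      - lieBracketWithin ℝ (rhoC ρ V).2 (rhoC ρ W).2 Ω x = (1 / 4 : ℝ) • ξ := by
    simp only [rhoC, lieBracketWithin, hf1, hf2, hf3, hf4]
    simp only [ContinuousLinearMap.smul_apply, ContinuousLinearMap.neg_apply, map_smul,
      map_neg, smul_neg, neg_neg]
    rw [hξdef, ha, hb]
    simp only [smul_comm Complex.I ((1:ℝ)/2), smul_smul, smul_sub, smul_add]
    norm_num
    abel
  have himag : lieBracketWithin ℝ (rhoC ρ V).1 (rhoC ρ W).2 Ω x
      + lieBracketWithin ℝ (rhoC ρ V).2 (rhoC ρ W).1 Ω x = -((1 / 4 : ℝ) • η) := by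
    simp only [rhoC, lieBracketWithin, hf1, hf2, hf3, hf4]
    simp only [ContinuousLinearMap.smul_apply, ContinuousLinearMap.neg_apply, map_smul,
      map_neg, smul_neg, neg_neg]
    rw [hηdef, ha, hb]
    simp only [smul_comm Complex.I ((1:ℝ)/2), smul_smul, smul_sub, smul_add, smul_neg]
    norm_num
    abel
  rw [cLieBracketWithin, Prod.mk_eq_zero]
  constructor
  · rw [hreal, hξ0, smul_zero]
  · rw [himag, hη0, smul_zero, neg_zero]
end
end

section
/- On M̃ = ℂ with coordinate z = x + iy, both of the following are complex gradient systems of dimension 1 extending the vector field V₀ = ∂/∂x along the line M = ℝ = {y = 0}, yet their gradient maps differ off M: (a) the vector field X = ∂/∂x with gradient map u(z) = -y satisfies du(X) = 0 and d^cu(X) = 1; (b) the vector field X₁ = e^y ∂/∂x with gradient map u₁(z) = e^{-y} - 1 satisfies du₁(X₁) = 0 and d^cu₁(X₁) = 1, and X₁ = ∂/∂x at every point of ℝ. In particular, a complex gradient system extending given initial data along M with prescribed vanishing locus need not have a unique gradient map. -/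
noncomputable section

lemma hF (z : ℂ) : HasFDerivAt (fun w : ℂ => -w.im) (-Complex.imCLM) z :=
  Complex.imCLM.hasFDerivAt.neg

lemma hF1 (z : ℂ) : HasFDerivAt (fun w : ℂ => Real.exp (-w.im) - 1)
    ((Real.exp (-z.im)) • (-Complex.imCLM)) z := by
  have h := ((Real.hasDerivAt_exp (-z.im)).comp_hasFDerivAt z (hF z)).sub_const 1
  exact h

lemma fder (z : ℂ) (v : ℂ) : fderiv ℝ (fun w : ℂ => -w.im) z v = -v.im := by
  rw [(hF z).fderiv]; simp

lemma fder1 (z : ℂ) (v : ℂ) :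
    fderiv ℝ (fun w : ℂ => Real.exp (-w.im) - 1) z v = Real.exp (-z.im) * (-v.im) := by
  rw [(hF1 z).fderiv]; simp


/-- On `M̃ = ℂ` with coordinate `z = x + iy` (where `J(∂/∂x) = ∂/∂y`,
`d^cu(X) = -du(JX)`, and a vector field on `ℂ` is encoded as a function `ℂ → ℂ` with
`∂/∂x ↦ 1`, `J X = i • X`), both of the following are one-dimensional complex gradient
systems extending `V₀ = ∂/∂x` along `M = ℝ = {y = 0}`, with different gradient maps
off `M`:
(a) the vector field `X = ∂/∂x` (i.e. the constant field `1`) with gradient map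
`u(z) = -y` satisfies `du(X) = 0` and `d^cu(X) = 1`;
(b) the vector field `X₁ = e^y ∂/∂x` with gradient map `u₁(z) = e^{-y} - 1` satisfies
`du₁(X₁) = 0` and `d^cu₁(X₁) = 1`, and `X₁ = ∂/∂x` at every point of `ℝ`;
and the gradient maps `u` and `u₁` differ at every point off `M`. In particular a
complex gradient system extending given initial data along `M` with prescribed
vanishing locus need not have a unique gradient map. -/
theorem two_gradient_systems_extending_same_data :
    -- (a) `du(X) = 0` and `d^cu(X) = 1` for `X = ∂/∂x`, `u = -y`
    (∀ z : ℂ, fderiv ℝ (fun w : ℂ => -w.im) z ((1 : ℂ)) = 0) ∧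
    (∀ z : ℂ, -fderiv ℝ (fun w : ℂ => -w.im) z (Complex.I • (1 : ℂ)) = 1) ∧
    -- (b) `du₁(X₁) = 0` and `d^cu₁(X₁) = 1` for `X₁ = e^y ∂/∂x`, `u₁ = e^{-y} - 1`
    (∀ z : ℂ,
      fderiv ℝ (fun w : ℂ => Real.exp (-w.im) - 1) z ((Real.exp z.im : ℂ)) = 0) ∧
    (∀ z : ℂ,
      -fderiv ℝ (fun w : ℂ => Real.exp (-w.im) - 1) z
        (Complex.I • ((Real.exp z.im : ℝ) : ℂ)) = 1) ∧
    -- `X₁` extends `V₀ = ∂/∂x` along `M = ℝ`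
    (∀ z : ℂ, z.im = 0 → ((Real.exp z.im : ℝ) : ℂ) = 1) ∧
    -- both gradient maps vanish exactly on `M = ℝ` …
    (∀ z : ℂ, (-z.im = 0 ↔ z.im = 0) ∧ (Real.exp (-z.im) - 1 = 0 ↔ z.im = 0)) ∧
    -- … yet they differ at every point off `M`
    (∀ z : ℂ, z.im ≠ 0 → -z.im ≠ Real.exp (-z.im) - 1) := by
  refine ⟨fun z => ?_, fun z => ?_, fun z => ?_, fun z => ?_, fun z hz => ?_,
    fun z => ⟨?_, ?_⟩, fun z hz => ?_⟩
  · rw [fder]; simp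
  · rw [fder]; simp
  · rw [fder1]; simp
  · rw [fder1]
    simp [Complex.exp_ofReal_re, ← Real.exp_add]
  · simp [hz]
  · simp
  · constructor
    · intro h
      have h1 : Real.exp (-z.im) = Real.exp 0 := by rw [Real.exp_zero]; linarith
      have := Real.exp_injective h1
      linarith
    · intro h; simp [h]
  · intro h
    have key : -z.im + 1 < Real.exp (-z.im) :=
      Real.add_one_lt_exp (by simpa using hz)
    linarith
end
end

section
/- Let Ω = {(z₁, z₂) ∈ ℂ² : x₁ > 0, y₁ > 0}, where z_α = x_α + i y_α, and set θ₁ = arctan(y₁/x₁). Define u₁ = -θ₁, u₂ = -y₂θ₁/y₁, and the vector fields Ṽ₁ = x₁∂/∂x₁ + y₁∂/∂y₁ + y₂(x₁/y₁ - 1/θ₁)∂/∂x₂ + y₂∂/∂y₂ and Ṽ₂ = (y₁/θ₁)∂/∂x₂ on Ω. Then du_α(Ṽ_β) = 0 and d^cu_α(Ṽ_β) = δ_{αβ} for α, β ∈ {1,2}, and the Lie brackets satisfy [Ṽ₁, Ṽ₂] = Ṽ₂, [JṼ₁, JṼ₂] = Ṽ₂, [Ṽ₁, JṼ₁] = (2y₂/y₁)(x₁/y₁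 - 1/θ₁)Ṽ₂, [Ṽ₁, JṼ₂] = -(x₁/y₁ - 1/θ₁)Ṽ₂, and [Ṽ₂, JṼ₂] = 0. In particular ρ(E₁) = Ṽ₁, ρ(E₂) = Ṽ₂ defines a Lie algebra homomorphism from the two-dimensional nonabelian Lie algebra with [E₁,E₂] = E₂ into vector fields, but Ṽ₁, Ṽ₂, JṼ₁, JṼ₂ do not span a Lie subalgebra of Γ(Ω, TΩ) with constant structure constants, since [Ṽ₁, JṼ₁] has a nonconstant coefficient. -/
open VectorField

noncomputable section

/-- `θ₁ = arctan (y₁ / x₁)` on `ℂ²` (a real vector field on `ℂ²` is encoded as a map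
`ℂ² → ℂ²`, with `∂/∂x_α ↦ Pi.single α 1`, `∂/∂y_α ↦ Pi.single α i`, `J X = i • X`). -/
def theta1 (z : Fin 2 → ℂ) : ℝ := Real.arctan ((z 0).im / (z 0).re)

/-- The domain `Ω = {x₁ > 0, y₁ > 0} ⊆ ℂ²`. -/
def affOmega : Set (Fin 2 → ℂ) := {z | 0 < (z 0).re ∧ 0 < (z 0).im}

/-- `Ṽ₁ = x₁∂/∂x₁ + y₁∂/∂y₁ + y₂(x₁/y₁ - 1/θ₁)∂/∂x₂ + y₂∂/∂y₂`. -/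
def affV1 (z : Fin 2 → ℂ) : Fin 2 → ℂ :=
  ![z 0,
    (((z 1).im * ((z 0).re / (z 0).im - 1 / theta1 z) : ℝ) : ℂ)
      + ((z 1).im : ℂ) * Complex.I]

/-- `Ṽ₂ = (y₁/θ₁)∂/∂x₂`. -/
def affV2 (z : Fin 2 → ℂ) : Fin 2 → ℂ :=
  ![0, (((z 0).im / theta1 z : ℝ) : ℂ)]

/-- `u₁ = -θ₁`. -/
def affu1 (z : Fin 2 → ℂ) : ℝ := -theta1 z

/-- `u₂ = -y₂θ₁/y₁`. -/
def affu2 (z : Fin 2 → ℂ) : ℝ := -((z 1).im * theta1 z / (z 0).im)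

/-!
On the quadrant, `θ₁ = arctan (y₁ / x₁)` is `arg z₁`, so `dθ₁` vanishes on the radial field `z₁`
and is `1` on the rotation field `i z₁`; these are the `z₁`-parts of `Ṽ₁` and `JṼ₁`, while `Ṽ₂`
and `JṼ₂` have no `z₁`-part. The `∂/∂x₂`-coefficients `x₁/y₁ - 1/θ₁` of `Ṽ₁ / y₂` and `y₁/θ₁`
of `Ṽ₂` depend on `z₁` only, are homogeneous of degree `0` and `1`, and have explicit
derivatives along `i z₁`; the chain rule then turns every identity into an algebraic one. The
brackets have no `z₁`-component because the `z₁`-parts `z₁, i z₁, 0` commute. For the last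
claim: at `(1 + i, 0)` the bracket `[Ṽ₁, JṼ₁]` vanishes while `Ṽ₁, Ṽ₂, JṼ₁, JṼ₂` are
independent, which forces all constants to vanish, but at `(1 + i, i)` it is
`2 (1 - 4/π) Ṽ₂ ≠ 0`.
-/

open Complex Real

section Calculus

variable {𝕜 E F : Type*} [NontriviallyNormedField 𝕜] [NormedAddCommGroup E] [NormedSpace 𝕜 E]
  [NormedAddCommGroup F] [NormedSpace 𝕜 F]

theorem HasFDerivAt.div {f g : E → 𝕜} {f' g' : E →L[𝕜] 𝕜} {x : E} (hf : HasFDerivAt f f' x)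
    (hg : HasFDerivAt g g' x) (hx : g x ≠ 0) :
    HasFDerivAt (fun y => f y / g y) ((g x ^ 2)⁻¹ • (g x • f' - f x • g')) x := by
  have h := hf.fun_mul ((hasDerivAt_inv hx).comp_hasFDerivAt x hg)
  simp only [Function.comp_def, ← div_eq_mul_inv] at h
  refine h.congr_fderiv ?_
  ext v
  simp only [add_apply, smul_apply, smul_eq_mul, sub_apply]
  field_simp
  ring

theorem hasFDerivAt_pair {f g : E → F} {f' g' : E →L[𝕜] F} {x : E} (hf : HasFDerivAt f f' x)
    (hg : HasFDerivAt g g' x) :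
    HasFDerivAt (fun y => ![f y, g y]) (ContinuousLinearMap.pi ![f', g']) x := by
  refine hasFDerivAt_pi'' fun i => ?_
  fin_cases i
  exacts [hf, hg]

theorem hasFDerivAt_comp_apply {ι : Type*} [Fintype ι] (i : ι) {f : E → F} {z : ι → E}
    (hf : DifferentiableAt 𝕜 f (z i)) :
    HasFDerivAt (fun w : ι → E => f (w i)) (fderiv 𝕜 f (z i) ∘L .proj i) z :=
  hf.hasFDerivAt.comp z (hasFDerivAt_apply i z)

theorem lieBracket_eq_of_hasFDerivAt {V W : E → E} {V' W' : E →L[𝕜] E} {x : E}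
    (hV : HasFDerivAt V V' x) (hW : HasFDerivAt W W' x) :
    lieBracket 𝕜 V W x = W' (V x) - V' (W x) := by
  rw [lieBracket, hV.fderiv, hW.fderiv]

end Calculus

theorem hasFDerivAt_im_apply {ι : Type*} [Fintype ι] (i : ι) (z : ι → ℂ) :
    HasFDerivAt (fun w : ι → ℂ => (w i).im) (imCLM ∘L .proj i) z :=
  imCLM.hasFDerivAt.comp z (hasFDerivAt_apply i z)

section Quadrant

variable {ζ : ℂ}

def theta (ζ : ℂ) : ℝ := Real.arctan (ζ.im / ζ.re)

def coeffV1 (ζ : ℂ) : ℝ := ζ.re / ζ.im - 1 / theta ζ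

def coeffV2 (ζ : ℂ) : ℝ := ζ.im / theta ζ

theorem hasFDerivAt_theta (hx : 0 < ζ.re) :
    HasFDerivAt theta ((ζ.re ^ 2 + ζ.im ^ 2)⁻¹ • (ζ.re • imCLM - ζ.im • reCLM)) ζ := by
  refine ((imCLM.hasFDerivAt.div reCLM.hasFDerivAt hx.ne').arctan).congr_fderiv ?_
  ext v
  simp only [imCLM_apply, reCLM_apply, one_div, smul_apply, sub_apply, smul_eq_mul]
  field_simp

theorem differentiableAt_theta (hx : 0 < ζ.re) : DifferentiableAt ℝ theta ζ :=
  (hasFDerivAt_theta hx).differentiableAt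

theorem fderiv_theta_self (hx : 0 < ζ.re) : fderiv ℝ theta ζ ζ = 0 := by
  simp [(hasFDerivAt_theta hx).fderiv, mul_comm]

theorem fderiv_theta_I_mul (hx : 0 < ζ.re) : fderiv ℝ theta ζ (I * ζ) = 1 := by
  have : ζ.re ^ 2 + ζ.im ^ 2 ≠ 0 := by positivity
  simp only [(hasFDerivAt_theta hx).fderiv, smul_apply, sub_apply, imCLM_apply, mul_im, I_re,
    zero_mul, I_im, one_mul, zero_add, smul_eq_mul, reCLM_apply, mul_re, zero_sub, mul_neg,
    sub_neg_eq_add]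
  field_simp

theorem theta_pos (hx : 0 < ζ.re) (hy : 0 < ζ.im) : 0 < theta ζ :=
  Real.arctan_pos.2 (div_pos hy hx)

theorem coeffV2_pos (hx : 0 < ζ.re) (hy : 0 < ζ.im) : 0 < coeffV2 ζ :=
  div_pos hy (theta_pos hx hy)

theorem hasFDerivAt_coeffV1 (hx : 0 < ζ.re) (hy : 0 < ζ.im) :
    HasFDerivAt coeffV1 ((ζ.im ^ 2)⁻¹ • (ζ.im • reCLM - ζ.re • imCLM)
      + (theta ζ ^ 2)⁻¹ • fderiv ℝ theta ζ) ζ := by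
  refine ((reCLM.hasFDerivAt.div imCLM.hasFDerivAt hy.ne').sub
    ((hasFDerivAt_const 1 ζ).div (differentiableAt_theta hx).hasFDerivAt
      (theta_pos hx hy).ne')).congr_fderiv ?_
  ext v
  simp

theorem hasFDerivAt_coeffV2 (hx : 0 < ζ.re) (hy : 0 < ζ.im) :
    HasFDerivAt coeffV2 ((theta ζ ^ 2)⁻¹ • (theta ζ • imCLM - ζ.im • fderiv ℝ theta ζ)) ζ :=
  imCLM.hasFDerivAt.div (differentiableAt_theta hx).hasFDerivAt (theta_pos hx hy).ne'

theorem fderiv_coeffV1_self (hx : 0 < ζ.re) (hy : 0 < ζ.im) : fderiv ℝ coeffV1 ζ ζ = 0 := by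
  simp [(hasFDerivAt_coeffV1 hx hy).fderiv, fderiv_theta_self hx, mul_comm]

theorem coeffV1_sq_add_fderiv_coeffV1_I_mul_add_one (hx : 0 < ζ.re) (hy : 0 < ζ.im) :
    coeffV1 ζ ^ 2 + fderiv ℝ coeffV1 ζ (I * ζ) + 1 = -(2 / ζ.im * coeffV1 ζ * coeffV2 ζ) := by
  have := (theta_pos hx hy).ne'
  simp only [coeffV1, one_div, (hasFDerivAt_coeffV1 hx hy).fderiv, add_apply, smul_apply, sub_apply,
    reCLM_apply, mul_re, I_re, zero_mul, I_im, one_mul, zero_sub, smul_eq_mul, mul_neg, imCLM_apply,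
    mul_im, zero_add, fderiv_theta_I_mul hx, mul_one, coeffV2]
  field_simp
  ring

theorem fderiv_coeffV2_self (hx : 0 < ζ.re) (hy : 0 < ζ.im) :
    fderiv ℝ coeffV2 ζ ζ = coeffV2 ζ := by
  have := (theta_pos hx hy).ne'
  simp only [(hasFDerivAt_coeffV2 hx hy).fderiv, smul_apply, sub_apply, imCLM_apply, smul_eq_mul,
    fderiv_theta_self hx, mul_zero, sub_zero, coeffV2]
  field_simp

theorem fderiv_coeffV2_I_mul (hx : 0 < ζ.re) (hy : 0 < ζ.im) :
    fderiv ℝ coeffV2 ζ (I * ζ) = coeffV1 ζ * coeffV2 ζ := by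
  have := (theta_pos hx hy).ne'
  simp only [(hasFDerivAt_coeffV2 hx hy).fderiv, smul_apply, sub_apply, imCLM_apply, mul_im, I_re,
    zero_mul, I_im, one_mul, zero_add, smul_eq_mul, fderiv_theta_I_mul hx, mul_one, coeffV1,
    one_div, coeffV2]
  field_simp

theorem coeffV1_one_add_I : coeffV1 (1 + I) = 1 - 4 / π := by
  simp [coeffV1, theta, Real.arctan_one]

end Quadrant

section AffineGradientSystem

variable {z : Fin 2 → ℂ}

theorem affV1_eq :
    affV1 z = ![z 0, (((z 1).im * coeffV1 (z 0) : ℝ) : ℂ) + ((z 1).im : ℂ) * I] := rfl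

theorem affV2_eq : affV2 z = ![0, (coeffV2 (z 0) : ℂ)] := rfl

theorem fderiv_affu1_apply (hz : z ∈ affOmega) (v : Fin 2 → ℂ) :
    fderiv ℝ affu1 z v = -fderiv ℝ theta (z 0) (v 0) := by
  have h : HasFDerivAt affu1 _ z := (hasFDerivAt_comp_apply 0 (differentiableAt_theta hz.1)).neg
  simp [h.fderiv]

theorem fderiv_affu2_apply (hz : z ∈ affOmega) (v : Fin 2 → ℂ) :
    fderiv ℝ affu2 z v = -(((v 1).im * theta (z 0) + (z 1).im * fderiv ℝ theta (z 0) (v 0))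
      / (z 0).im - (z 1).im * theta (z 0) * (v 0).im / (z 0).im ^ 2) := by
  have hθ := hasFDerivAt_comp_apply 0 (differentiableAt_theta hz.1)
  have h : HasFDerivAt affu2 _ z :=
    (((hasFDerivAt_im_apply 1 z).mul hθ).div (hasFDerivAt_im_apply 0 z) hz.2.ne').neg
  have := hz.2.ne'
  simp only [h.fderiv, smul_add, Pi.mul_apply, neg_apply, smul_apply, sub_apply, add_apply,
    ContinuousLinearMap.comp_apply, ContinuousLinearMap.proj_apply, smul_eq_mul, imCLM_apply,
    neg_sub]
  field_simp
  ring

theorem hasFDerivAt_affV1 (hz : z ∈ affOmega) :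
    HasFDerivAt affV1 (.pi ![.proj 0,
      ofRealCLM ∘L ((z 1).im • fderiv ℝ coeffV1 (z 0) ∘L .proj 0
        + coeffV1 (z 0) • imCLM ∘L .proj 1) + I • ofRealCLM ∘L imCLM ∘L .proj 1]) z := by
  have hc := hasFDerivAt_comp_apply 0 (hasFDerivAt_coeffV1 hz.1 hz.2).differentiableAt
  refine hasFDerivAt_pair (hasFDerivAt_apply 0 z) ?_
  exact (ofRealCLM.hasFDerivAt.comp z ((hasFDerivAt_im_apply 1 z).mul hc)).add
    ((ofRealCLM.hasFDerivAt.comp z (hasFDerivAt_im_apply 1 z)).mul_const I)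

theorem hasFDerivAt_affV2 (hz : z ∈ affOmega) :
    HasFDerivAt affV2 (.pi ![0, ofRealCLM ∘L fderiv ℝ coeffV2 (z 0) ∘L .proj 0]) z :=
  hasFDerivAt_pair (hasFDerivAt_const 0 z) (ofRealCLM.hasFDerivAt.comp z
    (hasFDerivAt_comp_apply 0 (hasFDerivAt_coeffV2 hz.1 hz.2).differentiableAt))

theorem fderiv_affu1_affV1 (hz : z ∈ affOmega) : fderiv ℝ affu1 z (affV1 z) = 0 := by
  simp [fderiv_affu1_apply hz, affV1_eq, fderiv_theta_self hz.1]

theorem fderiv_affu1_affV2 (hz : z ∈ affOmega) : fderiv ℝ affu1 z (affV2 z) = 0 := by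
  simp [fderiv_affu1_apply hz, affV2_eq]

theorem fderiv_affu2_affV1 (hz : z ∈ affOmega) : fderiv ℝ affu2 z (affV1 z) = 0 := by
  have := hz.2.ne'
  simp only [affV1_eq, ofReal_mul, fderiv_affu2_apply hz, Matrix.cons_val_one,
    Matrix.cons_val_fin_one, add_im, mul_im, ofReal_re, ofReal_im, mul_zero, zero_mul, add_zero,
    I_im, mul_one, I_re, zero_add, Matrix.cons_val_zero, fderiv_theta_self hz.1, neg_sub]
  field_simp
  ring

theorem fderiv_affu2_affV2 (hz : z ∈ affOmega) : fderiv ℝ affu2 z (affV2 z) = 0 := by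
  simp [fderiv_affu2_apply hz, affV2_eq]

theorem neg_fderiv_affu1_I_smul_affV1 (hz : z ∈ affOmega) :
    -fderiv ℝ affu1 z (I • affV1 z) = 1 := by
  simp [fderiv_affu1_apply hz, affV1_eq, fderiv_theta_I_mul hz.1]

theorem neg_fderiv_affu1_I_smul_affV2 (hz : z ∈ affOmega) :
    -fderiv ℝ affu1 z (I • affV2 z) = 0 := by
  simp [fderiv_affu1_apply hz, affV2_eq]

theorem neg_fderiv_affu2_I_smul_affV1 (hz : z ∈ affOmega) :
    -fderiv ℝ affu2 z (I • affV1 z) = 0 := by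
  have := hz.2.ne'
  have := (theta_pos hz.1 hz.2).ne'
  simp only [affV1_eq, coeffV1, one_div, ofReal_mul, ofReal_sub, ofReal_div, ofReal_inv,
    Matrix.smul_cons, smul_eq_mul, Matrix.smul_empty, fderiv_affu2_apply hz, Matrix.cons_val_one,
    Matrix.cons_val_fin_one, mul_im, I_re, add_im, ofReal_re, sub_im, div_ofReal_im, ofReal_im,
    zero_div, inv_im, neg_zero, normSq_ofReal, sub_self, mul_zero, sub_re, div_ofReal_re, inv_re,
    div_self_mul_self', zero_mul, add_zero, I_im, mul_one, zero_add, add_re, mul_re, sub_zero,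
    one_mul, Matrix.cons_val_zero, fderiv_theta_I_mul hz.1, neg_sub]
  field_simp
  ring

theorem neg_fderiv_affu2_I_smul_affV2 (hz : z ∈ affOmega) :
    -fderiv ℝ affu2 z (I • affV2 z) = 1 := by
  have := hz.2.ne'
  have := (theta_pos hz.1 hz.2).ne'
  simp only [affV2_eq, coeffV2, ofReal_div, Matrix.smul_cons, smul_eq_mul, mul_zero,
    Matrix.smul_empty, fderiv_affu2_apply hz, Matrix.cons_val_one, Matrix.cons_val_fin_one, mul_im,
    I_re, div_ofReal_im, ofReal_im, zero_div, I_im, div_ofReal_re, ofReal_re, one_mul, zero_add,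
    Matrix.cons_val_zero, map_zero, add_zero, zero_im, sub_zero, neg_neg]
  field_simp

theorem lieBracket_affV1_affV2 (hz : z ∈ affOmega) : lieBracket ℝ affV1 affV2 z = affV2 z := by
  rw [lieBracket_eq_of_hasFDerivAt (hasFDerivAt_affV1 hz) (hasFDerivAt_affV2 hz)]
  ext i : 1
  fin_cases i <;> simp [affV1_eq, affV2_eq, fderiv_coeffV2_self hz.1 hz.2]

theorem lieBracket_I_smul_affV1_I_smul_affV2 (hz : z ∈ affOmega) :
    lieBracket ℝ (fun w => I • affV1 w) (fun w => I • affV2 w) z = affV2 z := by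
  rw [lieBracket_eq_of_hasFDerivAt ((hasFDerivAt_affV1 hz).fun_const_smul I)
    ((hasFDerivAt_affV2 hz).fun_const_smul I)]
  ext i : 1
  fin_cases i
  · simp [affV2_eq]
  · simp [affV1_eq, affV2_eq, fderiv_coeffV2_I_mul hz.1 hz.2, mul_add, ← mul_assoc]

theorem lieBracket_affV1_I_smul_affV1 (hz : z ∈ affOmega) :
    lieBracket ℝ affV1 (fun w => I • affV1 w) z
      = (2 * (z 1).im / (z 0).im * coeffV1 (z 0)) • affV2 z := by
  rw [lieBracket_eq_of_hasFDerivAt (hasFDerivAt_affV1 hz)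
    ((hasFDerivAt_affV1 hz).fun_const_smul I)]
  ext i : 1
  fin_cases i
  · simp [affV2_eq]
  · have key := congrArg ((↑) : ℝ → ℂ) (coeffV1_sq_add_fderiv_coeffV1_I_mul_add_one hz.1 hz.2)
    push_cast at key
    simp only [ContinuousLinearMap.comp_add, ContinuousLinearMap.comp_smulₛₗ, ringHom_apply,
      affV1_eq, ofReal_mul, smul_apply, ContinuousLinearMap.coe_pi', Matrix.smul_cons, smul_eq_mul,
      Matrix.smul_empty, Fin.mk_one, Pi.sub_apply, Pi.smul_apply, Matrix.cons_val_one,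
      Matrix.cons_val_fin_one, add_apply, ContinuousLinearMap.comp_apply,
      ContinuousLinearMap.proj_apply, Matrix.cons_val_zero, fderiv_coeffV1_self hz.1 hz.2,
      ofRealCLM_apply, ofReal_zero, smul_zero, imCLM_apply, add_im, mul_im, ofReal_re, ofReal_im,
      mul_zero, zero_mul, add_zero, I_im, mul_one, I_re, zero_add, real_smul, add_re, mul_re,
      sub_zero, sub_self, one_mul, affV2_eq, ofReal_div, ofReal_ofNat]
    linear_combination (-((z 1).im : ℂ)) * key + ((z 1).im : ℂ) * I_mul_I

theorem lieBracket_affV1_I_smul_affV2 (hz : z ∈ affOmega) :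
    lieBracket ℝ affV1 (fun w => I • affV2 w) z = -(coeffV1 (z 0) • affV2 z) := by
  rw [lieBracket_eq_of_hasFDerivAt (hasFDerivAt_affV1 hz)
    ((hasFDerivAt_affV2 hz).fun_const_smul I)]
  ext i : 1
  fin_cases i <;> simp [affV1_eq, affV2_eq, fderiv_coeffV2_self hz.1 hz.2]

theorem lieBracket_affV2_I_smul_affV2 (hz : z ∈ affOmega) :
    lieBracket ℝ affV2 (fun w => I • affV2 w) z = 0 := by
  rw [lieBracket_eq_of_hasFDerivAt (hasFDerivAt_affV2 hz)
    ((hasFDerivAt_affV2 hz).fun_const_smul I)]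
  ext i : 1
  fin_cases i <;> simp [affV2_eq]

theorem not_exists_const_coeffs_lieBracket_affV1_I_smul_affV1 :
    ¬ ∃ a b c d : ℝ, ∀ z ∈ affOmega, lieBracket ℝ affV1 (fun w => I • affV1 w) z
      = a • affV1 z + b • affV2 z + c • (I • affV1 z) + d • (I • affV2 z) := by
  rintro ⟨a, b, c, d, h⟩
  have hB z (hz : z ∈ affOmega) := (lieBracket_affV1_I_smul_affV1 hz).symm.trans (h z hz)
  have hp : ![1 + I, 0] ∈ affOmega := by simp [affOmega]
  have hq : ![1 + I, I] ∈ affOmega := by simp [affOmega]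
  obtain ⟨rfl, rfl⟩ : a = 0 ∧ c = 0 := by
    have h0 : 0 = a + -c ∧ 0 = a + c := by
      simpa [affV1_eq, affV2_eq, Complex.ext_iff] using congrFun (hB _ hp) 0
    constructor <;> linarith [h0.1, h0.2]
  -- once `a = c = 0`, the right-hand side depends only on `z₁`, which both points share
  have hpq := (hB _ hp).trans ((hB _ hq).trans (by simp [affV2_eq])).symm
  have hb := (coeffV2_pos (ζ := 1 + I) (by simp) (by simp)).ne'
  have hc : coeffV1 (1 + I) ≠ 0 := by
    rw [coeffV1_one_add_I, sub_ne_zero, ne_comm, Ne, div_eq_one_iff_eq pi_pos.ne']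
    exact pi_lt_four.ne'
  have h1 := congrFun hpq 1
  simp [affV2_eq, hb, hc] at h1

end AffineGradientSystem

/-- On `Ω = {x₁ > 0, y₁ > 0} ⊆ ℂ²`, with `θ₁ = arctan(y₁/x₁)`,
`u₁ = -θ₁`, `u₂ = -y₂θ₁/y₁`, `Ṽ₁ = x₁∂x₁ + y₁∂y₁ + y₂(x₁/y₁ - 1/θ₁)∂x₂ + y₂∂y₂`,
`Ṽ₂ = (y₁/θ₁)∂x₂`: one has `du_α(Ṽ_β) = 0`, `d^cu_α(Ṽ_β) = δ_{αβ}`, the Lie brackets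
`[Ṽ₁,Ṽ₂] = Ṽ₂`, `[JṼ₁,JṼ₂] = Ṽ₂`, `[Ṽ₁,JṼ₁] = (2y₂/y₁)(x₁/y₁ - 1/θ₁)Ṽ₂`,
`[Ṽ₁,JṼ₂] = -(x₁/y₁ - 1/θ₁)Ṽ₂`, `[Ṽ₂,JṼ₂] = 0`; so `E₁ ↦ Ṽ₁, E₂ ↦ Ṽ₂` is a Lie
algebra homomorphism from the nonabelian algebra with `[E₁,E₂] = E₂`, but
`Ṽ₁, Ṽ₂, JṼ₁, JṼ₂` do not span a Lie subalgebra with constant structure constants,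
since `[Ṽ₁, JṼ₁]` has a nonconstant coefficient. -/
theorem affine_group_gradient_system :
    -- `du_α(Ṽ_β) = 0`
    (∀ z ∈ affOmega, fderiv ℝ affu1 z (affV1 z) = 0) ∧
    (∀ z ∈ affOmega, fderiv ℝ affu1 z (affV2 z) = 0) ∧
    (∀ z ∈ affOmega, fderiv ℝ affu2 z (affV1 z) = 0) ∧
    (∀ z ∈ affOmega, fderiv ℝ affu2 z (affV2 z) = 0) ∧
    -- `d^cu_α(Ṽ_β) = δ_{αβ}`
    (∀ z ∈ affOmega, -fderiv ℝ affu1 z (Complex.I • affV1 z) = 1) ∧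
    (∀ z ∈ affOmega, -fderiv ℝ affu1 z (Complex.I • affV2 z) = 0) ∧
    (∀ z ∈ affOmega, -fderiv ℝ affu2 z (Complex.I • affV1 z) = 0) ∧
    (∀ z ∈ affOmega, -fderiv ℝ affu2 z (Complex.I • affV2 z) = 1) ∧
    -- Lie bracket relations
    (∀ z ∈ affOmega, lieBracket ℝ affV1 affV2 z = affV2 z) ∧
    (∀ z ∈ affOmega,
      lieBracket ℝ (fun w => Complex.I • affV1 w) (fun w => Complex.I • affV2 w) z
        = affV2 z) ∧
    (∀ z ∈ affOmega,
      lieBracket ℝ affV1 (fun w => Complex.I • affV1 w) z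
        = ((2 * (z 1).im / (z 0).im) * ((z 0).re / (z 0).im - 1 / theta1 z))
            • affV2 z) ∧
    (∀ z ∈ affOmega,
      lieBracket ℝ affV1 (fun w => Complex.I • affV2 w) z
        = -(((z 0).re / (z 0).im - 1 / theta1 z) • affV2 z)) ∧
    (∀ z ∈ affOmega,
      lieBracket ℝ affV2 (fun w => Complex.I • affV2 w) z = 0) ∧
    -- no constant structure constants: `[Ṽ₁, JṼ₁]` is not a constant-coefficient
    -- combination of `Ṽ₁, Ṽ₂, JṼ₁, JṼ₂`
    ¬ ∃ a b c d : ℝ, ∀ z ∈ affOmega,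
        lieBracket ℝ affV1 (fun w => Complex.I • affV1 w) z
          = a • affV1 z + b • affV2 z
            + c • (Complex.I • affV1 z) + d • (Complex.I • affV2 z) := by
  exact ⟨fun _ => fderiv_affu1_affV1, fun _ => fderiv_affu1_affV2,
    fun _ => fderiv_affu2_affV1, fun _ => fderiv_affu2_affV2,
    fun _ => neg_fderiv_affu1_I_smul_affV1, fun _ => neg_fderiv_affu1_I_smul_affV2,
    fun _ => neg_fderiv_affu2_I_smul_affV1, fun _ => neg_fderiv_affu2_I_smul_affV2,
    fun _ => lieBracket_affV1_affV2, fun _ => lieBracket_I_smul_affV1_I_smul_affV2,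
    fun _ => lieBracket_affV1_I_smul_affV1, fun _ => lieBracket_affV1_I_smul_affV2,
    fun _ => lieBracket_affV2_I_smul_affV2, not_exists_const_coeffs_lieBracket_affV1_I_smul_affV1⟩
end
end
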